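/- arXiv:2112.03129 — 8 statements merged into one kernel-verified Lean document; each statement's English description precedes it below -/
import Mathlib

section
/- Let k, n ≥ 1, let ρ be a positive definite density matrix on M_k(ℂ)⊗M_n(ℂ) ≅ M_{kn}(ℂ), and let σ ∈ M_n(ℂ) be the (necessarily positive definite) density matrix determined by tr(σB) = tr(ρ(1_k⊗B)) for all B ∈ M_n(ℂ). Then the following are equivalent: (a) there exists a positive definite density matrix τ ∈ M_k(ℂ) such that ρ = τ⊗σ; (b) for every t ∈ ℝ and every A ∈ M_n(ℂ) there exists B ∈ M_n(ℂ) with ρ^{it}(1_k⊗A)ρ^{-it} = 1_k⊗B (i.e., the modular group Ad(ρ^{it}) leaves the subalgebra 1_k⊗M_n(ℂ) invariant). -/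
open Matrix Kronecker ComplexOrder

/-! If `ρ = τ ⊗ σ`, then `log ρ = log τ ⊗ 1 + 1 ⊗ log σ` with commuting summands, so
`ρ^{it} (1 ⊗ A) ρ^{-it} = 1 ⊗ σ^{it} A σ^{-it}`. Conversely, `1 ⊗ M_n` is a closed subspace, so
differentiating the invariance at `t = 0` gives `[log ρ, 1 ⊗ A] ∈ 1 ⊗ M_n` for all `A`. Taking the
partial trace over the first factor then shows that `log ρ - 1 ⊗ C`, with `C = k⁻¹ tr₁ (log ρ)`,
commutes with `1 ⊗ M_n`, hence is of the form `D ⊗ 1`. Exponentiating, `ρ = exp D ⊗ exp C`, and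
`σ = tr₁ ρ = tr (exp D) • exp C`, so `τ = exp D / tr (exp D)` works. -/

theorem HasDerivAt.mem_of_forall_mem {𝕜 F : Type*} [NontriviallyNormedField 𝕜]
    [NormedAddCommGroup F] [NormedSpace 𝕜 F] {S : Submodule 𝕜 F} (hS : IsClosed (S : Set F))
    {f : 𝕜 → F} {f' : F} {x : 𝕜} (hf : HasDerivAt f f' x) (hfS : ∀ t, f t ∈ S) : f' ∈ S :=
  hS.mem_of_tendsto (hasDerivAt_iff_tendsto_slope.1 hf)
    (Filter.Eventually.of_forall fun t => S.smul_mem _ (S.sub_mem (hfS t) (hfS x)))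

theorem hasDerivAt_exp_smul_mul_mul_exp_neg_smul {𝕂 𝔸 : Type*} [RCLike 𝕂] [NormedRing 𝔸]
    [NormedAlgebra 𝕂 𝔸] [CompleteSpace 𝔸] (M X : 𝔸) :
    HasDerivAt (fun t : 𝕂 => NormedSpace.exp (t • M) * X * NormedSpace.exp (-(t • M)))
      (M * X - X * M) 0 := by
  have h := ((hasDerivAt_exp_smul_const M (0 : 𝕂)).mul_const X).mul
    (hasDerivAt_exp_smul_const (-M) (0 : 𝕂))
  convert h using 1
  · funext t
    simp only [Pi.mul_apply, smul_neg]
  · simp [sub_eq_add_neg]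

namespace Matrix

theorem kronecker_sub {l m n p α : Type*} [Ring α] (A : Matrix l m α) (B₁ B₂ : Matrix n p α) :
    A ⊗ₖ (B₁ - B₂) = A ⊗ₖ B₁ - A ⊗ₖ B₂ := by
  ext
  simp [mul_sub]

theorem IsHermitian.kronecker {l m α : Type*} [CommMagma α] [StarMul α] {A : Matrix l l α}
    {B : Matrix m m α} (hA : A.IsHermitian) (hB : B.IsHermitian) : (A ⊗ₖ B).IsHermitian := by
  rw [IsHermitian, conjTranspose_kronecker, hA.eq, hB.eq]

theorem eq_submatrix_kronecker_one_of_forall_commute {l m R : Type*} [Fintype l] [Fintype m]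
    [DecidableEq l] [DecidableEq m] [Semiring R] {X : Matrix (l × m) (l × m) R}
    (hX : ∀ A : Matrix m m R, Commute X (1 ⊗ₖ A)) (i₀ : m) :
    X = X.submatrix (·, i₀) (·, i₀) ⊗ₖ (1 : Matrix m m R) := by
  have hX' (p q : m) (a b : l) (i j : m) :
      (if q = j then X (a, i) (b, p) else 0) = if p = i then X (a, q) (b, j) else 0 := by
    simpa [mul_apply, Fintype.sum_prod_type, one_apply, single_apply, ite_and] using
      congr_fun (congr_fun (hX (single p q 1)) (a, i)) (b, j)
  ext ⟨a, i⟩ ⟨b, j⟩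
  by_cases hij : i = j
  · subst hij
    simpa using hX' i i₀ a b i i₀
  · simpa [hij, eq_comm] using hX' j j a b i j

section TraceLeft

variable {l m R : Type*} [Fintype l]

def traceLeft [CommSemiring R] : Matrix (l × m) (l × m) R →ₗ[R] Matrix m m R where
  toFun X := of fun i j => ∑ a, X (a, i) (a, j)
  map_add' X Y := by ext; simp [Finset.sum_add_distrib]
  map_smul' c X := by ext; simp [Finset.mul_sum]

theorem traceLeft_apply [CommSemiring R] (X : Matrix (l × m) (l × m) R) (i j : m) :
    traceLeft X i j = ∑ a, X (a, i) (a, j) := rfl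

theorem traceLeft_kronecker [CommSemiring R] (P : Matrix l l R) (Q : Matrix m m R) :
    traceLeft (P ⊗ₖ Q) = P.trace • Q := by
  ext
  simp [traceLeft_apply, trace, Finset.sum_mul]

theorem traceLeft_one_kronecker [CommSemiring R] [DecidableEq l] (B : Matrix m m R) :
    traceLeft ((1 : Matrix l l R) ⊗ₖ B) = (Fintype.card l : R) • B := by
  rw [traceLeft_kronecker, trace_one]

theorem IsHermitian.traceLeft [CommSemiring R] [StarRing R] {X : Matrix (l × m) (l × m) R}
    (hX : X.IsHermitian) : (traceLeft X).IsHermitian := by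
  ext i j
  simpa [traceLeft_apply] using Finset.sum_congr rfl fun a _ => congr_fun₂ hX (a, i) (a, j)

theorem PosDef.traceLeft [CommRing R] [PartialOrder R] [StarRing R] [AddLeftMono R]
    [Nonempty l] {X : Matrix (l × m) (l × m) R} (hX : X.PosDef) : (traceLeft X).PosDef := by
  have : Matrix.traceLeft X = ∑ a, X.submatrix (a, ·) (a, ·) := by
    ext i j
    simp [traceLeft_apply, sum_apply]
  rw [this]
  exact posDef_sum Finset.univ_nonempty fun a _ => hX.submatrix (Prod.mk_right_injective a)

theorem PosDef.exists_kronecker_traceLeft [Nonempty l] {P : Matrix l l ℂ} (hP : P.PosDef)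
    (Q : Matrix m m ℂ) :
    ∃ τ : Matrix l l ℂ, τ.PosDef ∧ τ.trace = 1 ∧ P ⊗ₖ Q = τ ⊗ₖ Matrix.traceLeft (P ⊗ₖ Q) := by
  have hP₀ : P.trace ≠ 0 := hP.trace_pos.ne'
  refine ⟨P.trace⁻¹ • P, hP.smul (inv_pos.2 hP.trace_pos), ?_, ?_⟩
  · rw [trace_smul, smul_eq_mul, inv_mul_cancel₀ hP₀]
  · rw [traceLeft_kronecker, smul_kronecker, kronecker_smul, smul_smul, inv_mul_cancel₀ hP₀,
      one_smul]

variable [Fintype m]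

theorem trace_traceLeft [CommSemiring R] (X : Matrix (l × m) (l × m) R) :
    (traceLeft X).trace = X.trace := by
  simp only [trace, diag, traceLeft_apply, Fintype.sum_prod_type]
  exact Finset.sum_comm

theorem traceLeft_mul_one_kronecker [CommSemiring R] [DecidableEq l]
    (X : Matrix (l × m) (l × m) R) (B : Matrix m m R) :
    traceLeft (X * ((1 : Matrix l l R) ⊗ₖ B)) = traceLeft X * B := by
  ext i j
  simpa [traceLeft_apply, mul_apply, Fintype.sum_prod_type, one_apply, Finset.sum_mul]
    using Finset.sum_comm

theorem traceLeft_one_kronecker_mul [CommSemiring R] [DecidableEq l]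
    (X : Matrix (l × m) (l × m) R) (B : Matrix m m R) :
    traceLeft (((1 : Matrix l l R) ⊗ₖ B) * X) = B * traceLeft X := by
  ext i j
  simpa [traceLeft_apply, mul_apply, Fintype.sum_prod_type, one_apply, Finset.mul_sum]
    using Finset.sum_comm

theorem eq_traceLeft_of_forall_trace_mul [CommSemiring R] [DecidableEq l] [DecidableEq m]
    {ρ : Matrix (l × m) (l × m) R} {σ : Matrix m m R}
    (h : ∀ B, (σ * B).trace = (ρ * ((1 : Matrix l l R) ⊗ₖ B)).trace) : σ = traceLeft ρ := by
  ext i j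
  simpa [← trace_traceLeft, traceLeft_mul_one_kronecker, trace_mul_single] using h (single j i 1)

theorem commute_sub_one_kronecker_traceLeft [Field R] [DecidableEq l] [DecidableEq m]
    (hl : (Fintype.card l : R) ≠ 0) {H : Matrix (l × m) (l × m) R}
    (h : ∀ A : Matrix m m R, ∃ B, H * (1 ⊗ₖ A) - (1 ⊗ₖ A) * H = (1 : Matrix l l R) ⊗ₖ B)
    (A : Matrix m m R) :
    Commute (H - 1 ⊗ₖ ((Fintype.card l : R)⁻¹ • traceLeft H)) (1 ⊗ₖ A) := by
  set C := (Fintype.card l : R)⁻¹ • traceLeft H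
  obtain ⟨B, hB⟩ := h A
  have hCA : C * A - A * C = B := by
    have := congrArg traceLeft hB
    rw [map_sub, traceLeft_mul_one_kronecker, traceLeft_one_kronecker_mul,
      traceLeft_one_kronecker] at this
    rw [smul_mul_assoc, mul_smul_comm, ← smul_sub, this, inv_smul_smul₀ hl]
  rw [commute_iff_eq, ← sub_eq_zero]
  calc (H - 1 ⊗ₖ C) * (1 ⊗ₖ A) - (1 ⊗ₖ A) * (H - 1 ⊗ₖ C)
      = (H * (1 ⊗ₖ A) - (1 ⊗ₖ A) * H) - (1 : Matrix l l R) ⊗ₖ (C * A - A * C) := by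
        rw [sub_mul, mul_sub, ← mul_kronecker_mul, ← mul_kronecker_mul, one_mul, kronecker_sub]
        abel
    _ = 0 := by rw [hB, hCA, sub_self]

end TraceLeft

variable {l m : Type*} [Fintype l] [Fintype m] [DecidableEq l] [DecidableEq m]

theorem IsHermitian.exists_eq_kronecker_one_add_one_kronecker [Nonempty l] (i₀ : m)
    {H : Matrix (l × m) (l × m) ℂ} (hH : H.IsHermitian)
    (h : ∀ A : Matrix m m ℂ, ∃ B, H * (1 ⊗ₖ A) - (1 ⊗ₖ A) * H = (1 : Matrix l l ℂ) ⊗ₖ B) :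
    ∃ (D : Matrix l l ℂ) (C : Matrix m m ℂ), D.IsHermitian ∧ H = D ⊗ₖ 1 + 1 ⊗ₖ C := by
  set C := (Fintype.card l : ℂ)⁻¹ • Matrix.traceLeft H
  have hC : C.IsHermitian := hH.traceLeft.smul (IsSelfAdjoint.natCast _).inv₀
  have hX : (H - 1 ⊗ₖ C).IsHermitian := hH.sub (isHermitian_one.kronecker hC)
  refine ⟨_, C, hX.submatrix (·, i₀), ?_⟩
  rw [← sub_eq_iff_eq_add]
  exact eq_submatrix_kronecker_one_of_forall_commute
    (commute_sub_one_kronecker_traceLeft (Nat.cast_ne_zero.2 Fintype.card_ne_zero) h) i₀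

theorem IsHermitian.posDef_exp {M : Matrix m m ℂ} (hM : M.IsHermitian) :
    (NormedSpace.exp M).PosDef := by
  open scoped Matrix.Norms.L2Operator MatrixOrder in
  exact (IsStrictlyPositive.iff_of_unital.2 ⟨hM.isSelfAdjoint.exp_nonneg, isUnit_exp M⟩).posDef

theorem IsHermitian.cfc_log_exp {M : Matrix m m ℂ} (hM : M.IsHermitian) :
    cfc Real.log (NormedSpace.exp M) = M := by
  open scoped Matrix.Norms.L2Operator in
  exact CFC.log_exp M hM.isSelfAdjoint

theorem PosDef.exp_cfc_log {M : Matrix m m ℂ} (hM : M.PosDef) :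
    NormedSpace.exp (cfc Real.log M) = M := by
  open scoped Matrix.Norms.L2Operator MatrixOrder in
  exact CFC.exp_log M hM.isStrictlyPositive

theorem exp_one_kronecker (B : Matrix m m ℂ) :
    NormedSpace.exp ((1 : Matrix l l ℂ) ⊗ₖ B) = 1 ⊗ₖ NormedSpace.exp B := by
  open scoped Matrix.Norms.Operator in
  let f := (kroneckerAlgEquiv l m ℂ).toAlgHom.comp Algebra.TensorProduct.includeRight
  exact (NormedSpace.map_exp f f.toLinearMap.continuous_of_finiteDimensional B).symm

theorem exp_kronecker_one (D : Matrix l l ℂ) :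
    NormedSpace.exp (D ⊗ₖ (1 : Matrix m m ℂ)) = NormedSpace.exp D ⊗ₖ 1 := by
  open scoped Matrix.Norms.Operator in
  let f := (kroneckerAlgEquiv l m ℂ).toAlgHom.comp Algebra.TensorProduct.includeLeft
  exact (NormedSpace.map_exp f f.toLinearMap.continuous_of_finiteDimensional D).symm

theorem exp_kronecker_one_add_one_kronecker (D : Matrix l l ℂ) (C : Matrix m m ℂ) :
    NormedSpace.exp (D ⊗ₖ 1 + 1 ⊗ₖ C) = NormedSpace.exp D ⊗ₖ NormedSpace.exp C := by
  have hDC : Commute (D ⊗ₖ (1 : Matrix m m ℂ)) ((1 : Matrix l l ℂ) ⊗ₖ C) := by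
    rw [commute_iff_eq, ← mul_kronecker_mul, ← mul_kronecker_mul, one_mul, mul_one, one_mul,
      mul_one]
  rw [exp_add_of_commute _ _ hDC, exp_kronecker_one, exp_one_kronecker, ← mul_kronecker_mul,
    mul_one, one_mul]

theorem exp_smul_mul_one_kronecker_mul_exp_neg_smul (D : Matrix l l ℂ) (C A : Matrix m m ℂ)
    (z : ℂ) :
    NormedSpace.exp (z • (D ⊗ₖ 1 + 1 ⊗ₖ C)) * ((1 : Matrix l l ℂ) ⊗ₖ A) *
        NormedSpace.exp ((-z) • (D ⊗ₖ 1 + 1 ⊗ₖ C)) =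
      1 ⊗ₖ (NormedSpace.exp (z • C) * A * NormedSpace.exp ((-z) • C)) := by
  have hsmul (w : ℂ) : w • (D ⊗ₖ 1 + 1 ⊗ₖ C) = (w • D) ⊗ₖ 1 + 1 ⊗ₖ (w • C) := by
    rw [smul_add, smul_kronecker, kronecker_smul]
  rw [hsmul, hsmul, exp_kronecker_one_add_one_kronecker, exp_kronecker_one_add_one_kronecker,
    ← mul_kronecker_mul, ← mul_kronecker_mul, mul_one, neg_smul,
    ← exp_add_of_commute _ _ (Commute.refl (z • D)).neg_right, add_neg_cancel, NormedSpace.exp_zero]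

theorem PosDef.cfc_log_kronecker {τ : Matrix l l ℂ} {σ : Matrix m m ℂ} (hτ : τ.PosDef)
    (hσ : σ.PosDef) :
    cfc Real.log (τ ⊗ₖ σ) = cfc Real.log τ ⊗ₖ 1 + 1 ⊗ₖ cfc Real.log σ := by
  have hK : (cfc Real.log τ ⊗ₖ (1 : Matrix m m ℂ) +
      (1 : Matrix l l ℂ) ⊗ₖ cfc Real.log σ).IsHermitian :=
    ((cfc_predicate Real.log τ).isHermitian.kronecker isHermitian_one).add
      (isHermitian_one.kronecker (cfc_predicate Real.log σ))
  rw [← hK.cfc_log_exp, exp_kronecker_one_add_one_kronecker, hτ.exp_cfc_log, hσ.exp_cfc_log]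

theorem exists_sub_eq_one_kronecker_of_forall_exp_conj {H : Matrix (l × m) (l × m) ℂ}
    {A : Matrix m m ℂ}
    (h : ∀ t : ℝ, ∃ B, NormedSpace.exp ((Complex.I * t) • H) * ((1 : Matrix l l ℂ) ⊗ₖ A) *
      NormedSpace.exp ((-(Complex.I * t)) • H) = 1 ⊗ₖ B) :
    ∃ B, H * (1 ⊗ₖ A) - (1 ⊗ₖ A) * H = (1 : Matrix l l ℂ) ⊗ₖ B := by
  open scoped Matrix.Norms.Operator in
  let S := LinearMap.range (kroneckerBilinear (R := ℝ) (1 : Matrix l l ℂ) (n := m) (p := m))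
  have hS : IsClosed (S : Set (Matrix (l × m) (l × m) ℂ)) := S.closed_of_finiteDimensional
  have hmem (t : ℝ) : NormedSpace.exp (t • Complex.I • H) * ((1 : Matrix l l ℂ) ⊗ₖ A) *
      NormedSpace.exp (-(t • Complex.I • H)) ∈ S := by
    obtain ⟨B, hB⟩ := h t
    rw [← Complex.coe_smul, smul_smul, mul_comm, ← neg_smul, hB]
    exact ⟨B, rfl⟩
  obtain ⟨B, hB⟩ := (hasDerivAt_exp_smul_mul_mul_exp_neg_smul (𝕂 := ℝ) (Complex.I • H)
    ((1 : Matrix l l ℂ) ⊗ₖ A)).mem_of_forall_mem hS hmem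
  refine ⟨-Complex.I • B, ?_⟩
  rw [kronecker_smul, show (1 : Matrix l l ℂ) ⊗ₖ B = _ from hB]
  simp [smul_sub, smul_smul]

end Matrix

theorem stmt_0_general (k n : ℕ) (hk : 1 ≤ k) (hn : 1 ≤ n)
    (ρ : Matrix (Fin k × Fin n) (Fin k × Fin n) ℂ)
    (hρ : ρ.PosDef)
    (σ : Matrix (Fin n) (Fin n) ℂ)
    (hσ : ∀ B : Matrix (Fin n) (Fin n) ℂ,
      (σ * B).trace = (ρ * ((1 : Matrix (Fin k) (Fin k) ℂ) ⊗ₖ B)).trace) :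
    (∃ τ : Matrix (Fin k) (Fin k) ℂ, τ.PosDef ∧ τ.trace = 1 ∧ ρ = τ ⊗ₖ σ) ↔
      (∀ (t : ℝ) (A : Matrix (Fin n) (Fin n) ℂ), ∃ B : Matrix (Fin n) (Fin n) ℂ,
        NormedSpace.exp ((Complex.I * (t : ℂ)) • (hρ.isHermitian.cfc Real.log)) *
            ((1 : Matrix (Fin k) (Fin k) ℂ) ⊗ₖ A) *
          NormedSpace.exp ((-(Complex.I * (t : ℂ))) • (hρ.isHermitian.cfc Real.log)) =
        (1 : Matrix (Fin k) (Fin k) ℂ) ⊗ₖ B) := by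
  have : NeZero k := ⟨by omega⟩
  have hσρ : σ = traceLeft ρ := eq_traceLeft_of_forall_trace_mul hσ
  rw [← hρ.isHermitian.cfc_eq]
  constructor
  · rintro ⟨τ, hτ, -, rfl⟩ t A
    rw [hτ.cfc_log_kronecker (hσρ ▸ hρ.traceLeft)]
    exact ⟨_, exp_smul_mul_one_kronecker_mul_exp_neg_smul _ _ A _⟩
  · intro h
    obtain ⟨D, C, hD, hH⟩ := (cfc_predicate Real.log ρ).isHermitian
      |>.exists_eq_kronecker_one_add_one_kronecker ⟨0, hn⟩
        fun A => exists_sub_eq_one_kronecker_of_forall_exp_conj (h · A)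
    have hρDC : ρ = NormedSpace.exp D ⊗ₖ NormedSpace.exp C := by
      rw [← hρ.exp_cfc_log, hH, exp_kronecker_one_add_one_kronecker]
    rw [hσρ, hρDC]
    exact hD.posDef_exp.exists_kronecker_traceLeft _

/-- For a positive definite density matrix `ρ` on `M_k(ℂ) ⊗ M_n(ℂ)` with
partial trace `σ` over the first factor, `ρ` factorizes as `τ ⊗ σ` with `τ` a positive
definite density matrix iff the modular group `Ad(ρ^{it})`, with
`ρ^{it} = exp(i t · log ρ)` (`log` via the functional calculus for Hermitian matrices),
leaves the subalgebra `1_k ⊗ M_n(ℂ)` invariant for all `t ∈ ℝ`. -/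
theorem stmt_0 (k n : ℕ) (hk : 1 ≤ k) (hn : 1 ≤ n)
    (ρ : Matrix (Fin k × Fin n) (Fin k × Fin n) ℂ)
    (hρ : ρ.PosDef) (hρtr : ρ.trace = 1)
    (σ : Matrix (Fin n) (Fin n) ℂ)
    (hσ : ∀ B : Matrix (Fin n) (Fin n) ℂ,
      (σ * B).trace = (ρ * ((1 : Matrix (Fin k) (Fin k) ℂ) ⊗ₖ B)).trace) :
    (∃ τ : Matrix (Fin k) (Fin k) ℂ, τ.PosDef ∧ τ.trace = 1 ∧ ρ = τ ⊗ₖ σ) ↔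
      (∀ (t : ℝ) (A : Matrix (Fin n) (Fin n) ℂ), ∃ B : Matrix (Fin n) (Fin n) ℂ,
        NormedSpace.exp ((Complex.I * (t : ℂ)) • (hρ.isHermitian.cfc Real.log)) *
            ((1 : Matrix (Fin k) (Fin k) ℂ) ⊗ₖ A) *
          NormedSpace.exp ((-(Complex.I * (t : ℂ))) • (hρ.isHermitian.cfc Real.log)) =
        (1 : Matrix (Fin k) (Fin k) ℂ) ⊗ₖ B) :=
  stmt_0_general k n hk hn ρ hρ σ hσ
end

section
/- Let k, n ≥ 1 and let ρ be a positive definite matrix on M_k(ℂ)⊗M_n(ℂ) with trace 1 such that for every A ∈ M_n(ℂ) there exists B ∈ M_n(ℂ) with ρ(1_k⊗A) = (1_k⊗B)ρ. Then there exist a positive definite density matrix τ ∈ M_k(ℂ) and a positive definite density matrix σ' ∈ M_n(ℂ) such that ρ = τ⊗σ'; moreover σ' is the partial trace of ρ over M_k(ℂ), i.e., tr(σ'B) = tr(ρ(1_k⊗B)) for all B ∈ M_n(ℂ). -/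
/-!
Fix an index `i₀` and let `σ = ρ_{i₀i₀}` be the corresponding diagonal `n × n` block of `ρ`; it is
positive definite. Reading `ρ(1 ⊗ A) = (1 ⊗ B)ρ` blockwise gives `ρ_{ij} A = B ρ_{ij}` for all
`i, j`, in particular `σ A = B σ`. Hence `σ⁻¹ ρ_{ij}` commutes with every `A`, so it is a scalar
`c_{ij}` and `ρ = c ⊗ σ`. Moving the factor `tr σ` from `σ` to `c` makes both factors have trace
one, and the left factor `τ` is positive definite because `ρ` restricted to a fixed second index `b`
is `σ'_{bb} • τ`.
-/

open Matrix Kronecker ComplexOrder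

namespace Matrix

variable {l m n p R : Type*} [CommSemiring R]

theorem submatrix_prodMk_mul_one_kronecker [Fintype l] [DecidableEq l] [Fintype n]
    (M : Matrix (m × n) (l × n) R) (A : Matrix n p R) (i : m) (j : l) :
    (M * ((1 : Matrix l l R) ⊗ₖ A)).submatrix (Prod.mk i) (Prod.mk j) =
      M.submatrix (Prod.mk i) (Prod.mk j) * A := by
  ext a b
  simp [mul_apply, Fintype.sum_prod_type, one_apply]

theorem submatrix_prodMk_one_kronecker_mul [Fintype m] [DecidableEq m] [Fintype n]
    (M : Matrix (m × n) (l × p) R) (B : Matrix n n R) (i : m) (j : l) :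
    (((1 : Matrix m m R) ⊗ₖ B) * M).submatrix (Prod.mk i) (Prod.mk j) =
      B * M.submatrix (Prod.mk i) (Prod.mk j) := by
  ext a b
  simp [mul_apply, Fintype.sum_prod_type, one_apply]

theorem submatrix_kronecker_prodMk_left (A : Matrix l p R) (B : Matrix m n R) (a : m) (b : n) :
    (A ⊗ₖ B).submatrix (fun i => (i, a)) (fun j => (j, b)) = B a b • A := by
  ext i j
  simp [mul_comm]

theorem trace_kronecker_mul_one_kronecker [Fintype m] [DecidableEq m] [Fintype n]
    (A : Matrix m m R) (B C : Matrix n n R) :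
    ((A ⊗ₖ B) * ((1 : Matrix m m R) ⊗ₖ C)).trace = A.trace * (B * C).trace := by
  rw [← mul_kronecker_mul, Matrix.mul_one, trace_kronecker]

theorem exists_eq_smul_of_forall_exists_mul_eq [Fintype n] [DecidableEq n]
    {σ D : Matrix n n R} (hσ : IsUnit σ)
    (h : ∀ A, ∃ B, σ * A = B * σ ∧ D * A = B * D) : ∃ r : R, D = r • σ := by
  obtain ⟨u, rfl⟩ := hσ
  set v : Matrix n n R := ↑u⁻¹
  have hcenter : v * D ∈ Set.center (Matrix n n R) := Semigroup.mem_center_iff.2 fun A => by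
    obtain ⟨B, huB, hDB⟩ := h A
    have hA : A * v = v * B := by
      rw [Units.eq_inv_mul_iff_mul_eq, ← Matrix.mul_assoc, huB, Units.mul_inv_cancel_right]
    rw [← Matrix.mul_assoc, hA, Matrix.mul_assoc, Matrix.mul_assoc, hDB]
  rw [center_eq_range] at hcenter
  obtain ⟨r, hr⟩ := hcenter
  refine ⟨r, ?_⟩
  rw [← Units.mul_inv_cancel_left u D, ← hr, scalar_apply, ← smul_one_eq_diagonal,
    Matrix.mul_smul, Matrix.mul_one]

theorem exists_eq_kronecker_of_forall_exists_mul_one_kronecker_eq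
    [Fintype m] [DecidableEq m] [Fintype n] [DecidableEq n]
    (ρ : Matrix (m × n) (m × n) R) {i₀ : m}
    (h₀ : IsUnit (ρ.submatrix (Prod.mk i₀) (Prod.mk i₀)))
    (h : ∀ A : Matrix n n R, ∃ B, ρ * ((1 : Matrix m m R) ⊗ₖ A) = ((1 : Matrix m m R) ⊗ₖ B) * ρ) :
    ∃ τ : Matrix m m R, ρ = τ ⊗ₖ ρ.submatrix (Prod.mk i₀) (Prod.mk i₀) := by
  have hblock (i j : m) : ∃ r : R, ρ.submatrix (Prod.mk i) (Prod.mk j) =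
      r • ρ.submatrix (Prod.mk i₀) (Prod.mk i₀) := by
    refine exists_eq_smul_of_forall_exists_mul_eq h₀ fun A => ?_
    obtain ⟨B, hB⟩ := h A
    refine ⟨B, ?_, ?_⟩ <;>
      rw [← submatrix_prodMk_mul_one_kronecker, hB, submatrix_prodMk_one_kronecker_mul]
  choose τ hτ using hblock
  refine ⟨Matrix.of τ, ?_⟩
  ext ⟨i, a⟩ ⟨j, b⟩
  simpa using congr_fun₂ (hτ i j) a b

theorem PosDef.of_kronecker_left {𝕜 : Type*} [RCLike 𝕜] [Fintype m] [Fintype n]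
    {A : Matrix m m 𝕜} {B : Matrix n n 𝕜} (hAB : (A ⊗ₖ B).PosDef) {b : n} (hb : 0 < B b b) :
    A.PosDef := by
  have hsub := (hAB.submatrix (e := fun i => (i, b)) fun _ _ h => (Prod.mk.inj h).1).smul
    (inv_pos.2 hb)
  rwa [submatrix_kronecker_prodMk_left, smul_smul, inv_mul_cancel₀ hb.ne', one_smul] at hsub

end Matrix

/-- If `ρ` is a positive definite trace-one matrix on `M_k(ℂ) ⊗ M_n(ℂ)` such
that for every `A ∈ M_n(ℂ)` there is `B ∈ M_n(ℂ)` with `ρ(1_k ⊗ A) = (1_k ⊗ B)ρ`, then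
`ρ = τ ⊗ σ'` for positive definite density matrices `τ ∈ M_k(ℂ)` and `σ' ∈ M_n(ℂ)`, where
`σ'` is the partial trace of `ρ` over `M_k(ℂ)`. -/
theorem stmt_1 (k n : ℕ) (hk : 1 ≤ k) (hn : 1 ≤ n)
    (ρ : Matrix (Fin k × Fin n) (Fin k × Fin n) ℂ)
    (hρ : ρ.PosDef) (hρtr : ρ.trace = 1)
    (hcomm : ∀ A : Matrix (Fin n) (Fin n) ℂ, ∃ B : Matrix (Fin n) (Fin n) ℂ,
      ρ * ((1 : Matrix (Fin k) (Fin k) ℂ) ⊗ₖ A) = ((1 : Matrix (Fin k) (Fin k) ℂ) ⊗ₖ B) * ρ) :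
    ∃ (τ : Matrix (Fin k) (Fin k) ℂ) (σ' : Matrix (Fin n) (Fin n) ℂ),
      τ.PosDef ∧ τ.trace = 1 ∧ σ'.PosDef ∧ σ'.trace = 1 ∧ ρ = τ ⊗ₖ σ' ∧
      (∀ B : Matrix (Fin n) (Fin n) ℂ,
        (σ' * B).trace = (ρ * ((1 : Matrix (Fin k) (Fin k) ℂ) ⊗ₖ B)).trace) := by
  have : NeZero k := ⟨by omega⟩
  have : NeZero n := ⟨by omega⟩
  set σ := ρ.submatrix (Prod.mk (0 : Fin k)) (Prod.mk 0)
  have hσ : σ.PosDef := hρ.submatrix (Prod.mk_right_injective _)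
  obtain ⟨τ', hρτ'⟩ := exists_eq_kronecker_of_forall_exists_mul_one_kronecker_eq ρ hσ.isUnit hcomm
  have ht : 0 < σ.trace := hσ.trace_pos
  have hσ' : (σ.trace⁻¹ • σ).PosDef := hσ.smul (inv_pos.2 ht)
  have hσ'tr : (σ.trace⁻¹ • σ).trace = 1 := by
    rw [trace_smul, smul_eq_mul, inv_mul_cancel₀ ht.ne']
  have hρτ : ρ = (σ.trace • τ') ⊗ₖ (σ.trace⁻¹ • σ) := by
    rw [smul_kronecker, kronecker_smul, smul_smul, mul_inv_cancel₀ ht.ne', one_smul, hρτ']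
  have hτtr : (σ.trace • τ').trace = 1 := by
    have h := trace_kronecker (σ.trace • τ') (σ.trace⁻¹ • σ)
    rwa [← hρτ, hρtr, hσ'tr, mul_one, eq_comm] at h
  refine ⟨_, _, (hρτ ▸ hρ).of_kronecker_left (hσ'.diag_pos (i := 0)), hτtr, hσ', hσ'tr, hρτ,
    fun B => ?_⟩
  rw [hρτ, trace_kronecker_mul_one_kronecker, hτtr, one_mul]
end

section
/- Let ρ be a (not necessarily invertible) density matrix on M_{kn}(ℂ) ≅ M_k(ℂ)⊗M_n(ℂ) and let σ ∈ M_n(ℂ) be the density matrix determined by tr(σB) = tr(ρ(1_k⊗B)) for all B ∈ M_n(ℂ). Then the following are equivalent: (a) there exists a conditional expectation E of M_{kn}(ℂ) onto the subalgebra 1_k⊗M_n(ℂ) with tr(ρE(A)) = tr(ρA) for all A ∈ M_{kn}(ℂ); (b) there exists a density matrix τ ∈ M_k(ℂ) such that ρ = τ⊗σ. -/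
open Matrix Kronecker ComplexOrder

/-! If `E` is a `tr (ρ ·)`-preserving conditional expectation onto `1 ⊗ M_n`, positivity makes
`E` commute with `ᴴ`, so `E` is a bimodule map over `1 ⊗ M_n`. Hence `E (C ⊗ 1)` commutes with
every `1 ⊗ B` and is a scalar `φ(C)`, and `tr (ρ (C ⊗ B)) = tr (ρ E (C ⊗ B)) = φ(C) tr (σ B)`:
on elementary tensors `ρ` pairs like `τ ⊗ σ`, where `τ` is the partial trace of `ρ` over the
second factor.

Conversely, for `ρ = τ ⊗ σ` the slice map `A ↦ 1 ⊗ tr₁ ((τ ⊗ 1) A)` is the required conditional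
expectation. It is positive because, writing `τ = s* s` and using that `tr₁` is cyclic for
`s ⊗ 1`, `tr₁ ((τ ⊗ 1) A) = tr₁ ((s ⊗ 1) A (s ⊗ 1)*)`. -/

namespace Matrix

variable {m n R : Type*}

section PartialTrace

variable [CommSemiring R]

def partialTraceFst [Fintype m] : Matrix (m × n) (m × n) R →ₗ[R] Matrix n n R where
  toFun X := ∑ a, X.submatrix (a, ·) (a, ·)
  map_add' X Y := by ext; simp [sum_apply, Finset.sum_add_distrib]
  map_smul' c X := by ext; simp [sum_apply, Finset.mul_sum]

def partialTraceSnd [Fintype n] : Matrix (m × n) (m × n) R →ₗ[R] Matrix m m R where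
  toFun X := ∑ i, X.submatrix (·, i) (·, i)
  map_add' X Y := by ext; simp [sum_apply, Finset.sum_add_distrib]
  map_smul' c X := by ext; simp [sum_apply, Finset.mul_sum]

theorem partialTraceFst_apply [Fintype m] (X : Matrix (m × n) (m × n) R) (i j : n) :
    partialTraceFst X i j = ∑ a, X (a, i) (a, j) := by
  simp [partialTraceFst, sum_apply]

theorem partialTraceSnd_apply [Fintype n] (X : Matrix (m × n) (m × n) R) (a b : m) :
    partialTraceSnd X a b = ∑ i, X (a, i) (b, i) := by
  simp [partialTraceSnd, sum_apply]

theorem trace_partialTraceFst_mul [Fintype m] [Fintype n] [DecidableEq m]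
    (X : Matrix (m × n) (m × n) R) (B : Matrix n n R) :
    trace (partialTraceFst X * B) = trace (X * (1 ⊗ₖ B)) := by
  simp only [trace, diag_apply, mul_apply, partialTraceFst_apply, Finset.sum_mul,
    kroneckerMap_apply, one_apply, ite_mul, one_mul, zero_mul, mul_ite, mul_zero,
    Fintype.sum_prod_type, Finset.sum_ite_irrel, Finset.sum_const_zero, Finset.sum_ite_eq',
    Finset.mem_univ, ↓reduceIte]
  exact (Finset.sum_congr rfl fun _ _ => Finset.sum_comm).trans Finset.sum_comm

theorem trace_partialTraceSnd_mul [Fintype m] [Fintype n] [DecidableEq n]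
    (X : Matrix (m × n) (m × n) R) (C : Matrix m m R) :
    trace (partialTraceSnd X * C) = trace (X * (C ⊗ₖ 1)) := by
  simp only [trace, diag_apply, mul_apply, partialTraceSnd_apply, Finset.sum_mul,
    kroneckerMap_apply, one_apply, mul_ite, mul_one, mul_zero, Fintype.sum_prod_type,
    Finset.sum_ite_eq', Finset.mem_univ, ↓reduceIte]
  exact Finset.sum_congr rfl fun _ _ => Finset.sum_comm

theorem partialTraceFst_kronecker [Fintype m] (C : Matrix m m R) (B : Matrix n n R) :
    partialTraceFst (C ⊗ₖ B) = trace C • B := by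
  ext i j
  simp [partialTraceFst_apply, trace, Finset.sum_mul]

theorem partialTraceFst_one_kronecker_mul [Fintype m] [Fintype n] [DecidableEq m]
    (B : Matrix n n R) (X : Matrix (m × n) (m × n) R) :
    partialTraceFst ((1 ⊗ₖ B) * X) = B * partialTraceFst X := by
  ext i j
  simp only [partialTraceFst_apply, mul_apply, kroneckerMap_apply, one_apply, ite_mul, one_mul,
    zero_mul, Fintype.sum_prod_type, Finset.sum_ite_irrel, Finset.sum_const_zero,
    Finset.sum_ite_eq, Finset.mem_univ, ↓reduceIte, Finset.mul_sum]
  exact Finset.sum_comm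

theorem partialTraceFst_kronecker_one_mul_comm [Fintype m] [Fintype n] [DecidableEq n]
    (C : Matrix m m R) (X : Matrix (m × n) (m × n) R) :
    partialTraceFst ((C ⊗ₖ 1) * X) = partialTraceFst (X * (C ⊗ₖ 1)) := by
  ext i j
  simp only [partialTraceFst_apply, mul_apply, kroneckerMap_apply, one_apply, mul_ite, mul_one,
    mul_zero, ite_mul, zero_mul, Fintype.sum_prod_type, Finset.sum_ite_eq, Finset.mem_univ,
    ↓reduceIte, Finset.sum_ite_eq']
  rw [Finset.sum_comm]
  simp only [mul_comm]

theorem ext_of_trace_mul_kronecker [Fintype m] [Fintype n] [DecidableEq m] [DecidableEq n]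
    {X Y : Matrix (m × n) (m × n) R}
    (h : ∀ C B, trace (X * (C ⊗ₖ B)) = trace (Y * (C ⊗ₖ B))) : X = Y := by
  ext ⟨a, i⟩ ⟨b, j⟩
  simpa [single_kronecker_single, trace_mul_single] using h (single b a 1) (single j i 1)

end PartialTrace

section PosSemidef

variable [CommRing R] [PartialOrder R] [StarRing R] [AddLeftMono R]
  {X : Matrix (m × n) (m × n) R}

theorem PosSemidef.partialTraceFst [Fintype m] (hX : X.PosSemidef) :
    (partialTraceFst X).PosSemidef :=
  posSemidef_sum _ fun a _ => hX.submatrix (a, ·)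

theorem PosSemidef.partialTraceSnd [Fintype n] (hX : X.PosSemidef) :
    (partialTraceSnd X).PosSemidef :=
  posSemidef_sum _ fun i _ => hX.submatrix (·, i)

end PosSemidef

open scoped MatrixOrder in
theorem map_conjTranspose_of_posSemidef [Fintype m] [DecidableEq m] [Fintype n] [DecidableEq n]
    (E : Matrix m m ℂ →ₗ[ℂ] Matrix n n ℂ)
    (hE : ∀ A : Matrix m m ℂ, A.PosSemidef → (E A).PosSemidef) (A : Matrix m m ℂ) :
    E Aᴴ = (E A)ᴴ :=
  map_star (PositiveLinearMap.mk₀ E fun A hA => (hE A hA.posSemidef).nonneg) A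

theorem one_kronecker_injective [Nonempty m] [DecidableEq m] [MulZeroOneClass R] :
    Function.Injective fun B : Matrix n n R => (1 : Matrix m m R) ⊗ₖ B := by
  intro B B' h
  ext i j
  simpa using congr_fun₂ h (Classical.arbitrary m, i) (Classical.arbitrary m, j)

section ConditionalExpectation

variable [Fintype m] [Fintype n] [DecidableEq m] [DecidableEq n]

theorem map_mul_one_kronecker {E : Matrix (m × n) (m × n) ℂ →ₗ[ℂ] Matrix (m × n) (m × n) ℂ}
    (hmul : ∀ A B, E ((1 ⊗ₖ B) * A) = (1 ⊗ₖ B) * E A)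
    (hpos : ∀ A, A.PosSemidef → (E A).PosSemidef) (A : Matrix (m × n) (m × n) ℂ)
    (B : Matrix n n ℂ) : E (A * (1 ⊗ₖ B)) = E A * (1 ⊗ₖ B) := by
  have hstar := map_conjTranspose_of_posSemidef E hpos
  calc E (A * (1 ⊗ₖ B)) = (E ((1 ⊗ₖ Bᴴ) * Aᴴ))ᴴ := by
        rw [← hstar, conjTranspose_mul, conjTranspose_kronecker]; simp
    _ = E A * (1 ⊗ₖ B) := by
        rw [hmul, conjTranspose_mul, ← hstar, conjTranspose_kronecker]; simp

theorem exists_map_kronecker_one_eq_smul_one [Nonempty m]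
    {E : Matrix (m × n) (m × n) ℂ →ₗ[ℂ] Matrix (m × n) (m × n) ℂ}
    (hrange : ∀ A, ∃ B, E A = 1 ⊗ₖ B) (hmul : ∀ A B, E ((1 ⊗ₖ B) * A) = (1 ⊗ₖ B) * E A)
    (hpos : ∀ A, A.PosSemidef → (E A).PosSemidef) (C : Matrix m m ℂ) :
    ∃ c : ℂ, E (C ⊗ₖ 1) = c • 1 := by
  obtain ⟨Φ, hΦ⟩ := hrange (C ⊗ₖ 1)
  have hcomm : ∀ B, Commute B Φ := fun B => one_kronecker_injective (m := m) <| by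
    have hCB : (1 ⊗ₖ B) * (C ⊗ₖ 1) = (C ⊗ₖ 1) * (1 ⊗ₖ B) := by
      simp [← mul_kronecker_mul]
    have h := congrArg E hCB
    rwa [hmul, map_mul_one_kronecker hmul hpos, hΦ, ← mul_kronecker_mul, ← mul_kronecker_mul,
      one_mul] at h
  obtain ⟨c, hc⟩ := mem_range_scalar_of_commute_single fun i j _ => hcomm (single i j 1)
  refine ⟨c, ?_⟩
  rw [hΦ, ← hc, scalar_apply, ← smul_one_eq_diagonal, kronecker_smul, one_kronecker_one]

theorem eq_partialTraceSnd_kronecker_of_condExp [Nonempty m]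
    {ρ : Matrix (m × n) (m × n) ℂ} {σ : Matrix n n ℂ} (hρ : trace ρ = 1)
    (hσ : ∀ B, trace (σ * B) = trace (ρ * (1 ⊗ₖ B)))
    {E : Matrix (m × n) (m × n) ℂ →ₗ[ℂ] Matrix (m × n) (m × n) ℂ}
    (hrange : ∀ A, ∃ B, E A = 1 ⊗ₖ B) (hmul : ∀ A B, E ((1 ⊗ₖ B) * A) = (1 ⊗ₖ B) * E A)
    (hpos : ∀ A, A.PosSemidef → (E A).PosSemidef) (hE : ∀ A, trace (ρ * E A) = trace (ρ * A)) :
    ρ = partialTraceSnd ρ ⊗ₖ σ := by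
  have hσ₁ : trace σ = 1 := by simpa [one_kronecker_one, hρ] using hσ 1
  refine ext_of_trace_mul_kronecker fun C B => ?_
  obtain ⟨c, hc⟩ := exists_map_kronecker_one_eq_smul_one hrange hmul hpos C
  have hslice : ∀ B, trace (ρ * (C ⊗ₖ B)) = c * trace (σ * B) := fun B => by
    have hCB : C ⊗ₖ B = (1 ⊗ₖ B) * (C ⊗ₖ 1) := by simp [← mul_kronecker_mul]
    rw [← hE, hCB, hmul, hc, hσ, mul_smul_comm, mul_one, Matrix.mul_smul, trace_smul, smul_eq_mul]
  rw [← mul_kronecker_mul, trace_kronecker, trace_partialTraceSnd_mul, hslice, hslice, mul_one,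
    hσ₁, mul_one]

end ConditionalExpectation

section CondExpOneKronecker

variable [CommSemiring R] [Fintype m] [Fintype n] [DecidableEq m] [DecidableEq n]

def condExpOneKronecker (τ : Matrix m m R) :
    Matrix (m × n) (m × n) R →ₗ[R] Matrix (m × n) (m × n) R where
  toFun A := 1 ⊗ₖ partialTraceFst ((τ ⊗ₖ 1) * A)
  map_add' A A' := by simp [Matrix.mul_add, kronecker_add]
  map_smul' c A := by simp [kronecker_smul]

theorem condExpOneKronecker_apply (τ : Matrix m m R) (A : Matrix (m × n) (m × n) R) :
    condExpOneKronecker τ A = 1 ⊗ₖ partialTraceFst ((τ ⊗ₖ 1) * A) := rfl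

theorem condExpOneKronecker_one_kronecker {τ : Matrix m m R} (hτ : trace τ = 1)
    (B : Matrix n n R) : condExpOneKronecker τ (1 ⊗ₖ B) = 1 ⊗ₖ B := by
  rw [condExpOneKronecker_apply, ← mul_kronecker_mul, mul_one, one_mul, partialTraceFst_kronecker,
    hτ, one_smul]

theorem condExpOneKronecker_one_kronecker_mul (τ : Matrix m m R) (A : Matrix (m × n) (m × n) R)
    (B : Matrix n n R) :
    condExpOneKronecker τ ((1 ⊗ₖ B) * A) = (1 ⊗ₖ B) * condExpOneKronecker τ A := by
  have hcomm : (τ ⊗ₖ 1) * (1 ⊗ₖ B) = (1 ⊗ₖ B) * (τ ⊗ₖ (1 : Matrix n n R)) := by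
    simp [← mul_kronecker_mul]
  rw [condExpOneKronecker_apply, condExpOneKronecker_apply, ← Matrix.mul_assoc, hcomm,
    Matrix.mul_assoc, partialTraceFst_one_kronecker_mul, ← mul_kronecker_mul, one_mul]

theorem trace_kronecker_mul_condExpOneKronecker {τ : Matrix m m R} (hτ : trace τ = 1)
    (σ : Matrix n n R) (A : Matrix (m × n) (m × n) R) :
    trace ((τ ⊗ₖ σ) * condExpOneKronecker τ A) = trace ((τ ⊗ₖ σ) * A) := by
  rw [condExpOneKronecker_apply, ← mul_kronecker_mul, mul_one, trace_kronecker, hτ, one_mul,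
    trace_mul_comm, trace_partialTraceFst_mul, Matrix.mul_assoc, trace_mul_comm, Matrix.mul_assoc,
    ← mul_kronecker_mul, one_mul, mul_one, trace_mul_comm]

open scoped MatrixOrder in
theorem PosSemidef.condExpOneKronecker {𝕜 : Type*} [RCLike 𝕜] {τ : Matrix m m 𝕜}
    (hτ : τ.PosSemidef) {A : Matrix (m × n) (m × n) 𝕜} (hA : A.PosSemidef) :
    (condExpOneKronecker τ A).PosSemidef := by
  obtain ⟨s, rfl⟩ := CStarAlgebra.nonneg_iff_eq_star_mul_self.mp hτ.nonneg
  have h : Matrix.partialTraceFst (((star s * s) ⊗ₖ 1) * A)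
      = Matrix.partialTraceFst ((s ⊗ₖ 1) * A * (s ⊗ₖ (1 : Matrix n n 𝕜))ᴴ) := by
    rw [conjTranspose_kronecker, conjTranspose_one, ← star_eq_conjTranspose,
      ← partialTraceFst_kronecker_one_mul_comm, ← Matrix.mul_assoc, ← mul_kronecker_mul, one_mul]
  rw [condExpOneKronecker_apply, h]
  exact PosSemidef.one.kronecker (PosSemidef.partialTraceFst (hA.mul_mul_conjTranspose_same _))

end CondExpOneKronecker

end Matrix

theorem stmt_3_general (k n : ℕ) (hk : 1 ≤ k)
    (ρ : Matrix (Fin k × Fin n) (Fin k × Fin n) ℂ)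
    (hρ : ρ.PosSemidef) (hρtr : ρ.trace = 1)
    (σ : Matrix (Fin n) (Fin n) ℂ)
    (hσ : ∀ B : Matrix (Fin n) (Fin n) ℂ,
      (σ * B).trace = (ρ * ((1 : Matrix (Fin k) (Fin k) ℂ) ⊗ₖ B)).trace) :
    (∃ E : Matrix (Fin k × Fin n) (Fin k × Fin n) ℂ →ₗ[ℂ]
            Matrix (Fin k × Fin n) (Fin k × Fin n) ℂ,
      (∀ A, ∃ B : Matrix (Fin n) (Fin n) ℂ, E A = (1 : Matrix (Fin k) (Fin k) ℂ) ⊗ₖ B) ∧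
      (∀ B : Matrix (Fin n) (Fin n) ℂ,
        E ((1 : Matrix (Fin k) (Fin k) ℂ) ⊗ₖ B) = (1 : Matrix (Fin k) (Fin k) ℂ) ⊗ₖ B) ∧
      (∀ (A : Matrix (Fin k × Fin n) (Fin k × Fin n) ℂ) (B : Matrix (Fin n) (Fin n) ℂ),
        E (((1 : Matrix (Fin k) (Fin k) ℂ) ⊗ₖ B) * A)
          = ((1 : Matrix (Fin k) (Fin k) ℂ) ⊗ₖ B) * E A) ∧
      (∀ A : Matrix (Fin k × Fin n) (Fin k × Fin n) ℂ, A.PosSemidef → (E A).PosSemidef) ∧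
      (∀ A : Matrix (Fin k × Fin n) (Fin k × Fin n) ℂ, (ρ * E A).trace = (ρ * A).trace)) ↔
    (∃ τ : Matrix (Fin k) (Fin k) ℂ, τ.PosSemidef ∧ τ.trace = 1 ∧ ρ = τ ⊗ₖ σ) := by
  constructor
  · rintro ⟨E, hrange, -, hmul, hpos, hE⟩
    have : Nonempty (Fin k) := ⟨⟨0, hk⟩⟩
    have htr : trace (partialTraceSnd ρ) = 1 := by
      simpa [one_kronecker_one, hρtr] using trace_partialTraceSnd_mul ρ 1
    exact ⟨partialTraceSnd ρ, hρ.partialTraceSnd, htr,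
      eq_partialTraceSnd_kronecker_of_condExp hρtr hσ hrange hmul hpos hE⟩
  · rintro ⟨τ, hτ, hτtr, rfl⟩
    exact ⟨condExpOneKronecker τ, fun A => ⟨_, rfl⟩, condExpOneKronecker_one_kronecker hτtr,
      condExpOneKronecker_one_kronecker_mul τ, fun A hA => hτ.condExpOneKronecker hA,
      trace_kronecker_mul_condExpOneKronecker hτtr σ⟩

/-- For a (not necessarily invertible) density matrix `ρ` on
`M_{kn}(ℂ) ≅ M_k(ℂ) ⊗ M_n(ℂ)` with partial trace `σ ∈ M_n(ℂ)`, there is a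
`tr(ρ ·)`-preserving conditional expectation of `M_{kn}(ℂ)` onto the subalgebra
`1_k ⊗ M_n(ℂ)` iff `ρ = τ ⊗ σ` for some density matrix `τ ∈ M_k(ℂ)`. -/
theorem stmt_3 (k n : ℕ) (hk : 1 ≤ k) (hn : 1 ≤ n)
    (ρ : Matrix (Fin k × Fin n) (Fin k × Fin n) ℂ)
    (hρ : ρ.PosSemidef) (hρtr : ρ.trace = 1)
    (σ : Matrix (Fin n) (Fin n) ℂ)
    (hσ : ∀ B : Matrix (Fin n) (Fin n) ℂ,
      (σ * B).trace = (ρ * ((1 : Matrix (Fin k) (Fin k) ℂ) ⊗ₖ B)).trace) :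
    (∃ E : Matrix (Fin k × Fin n) (Fin k × Fin n) ℂ →ₗ[ℂ]
            Matrix (Fin k × Fin n) (Fin k × Fin n) ℂ,
      (∀ A, ∃ B : Matrix (Fin n) (Fin n) ℂ, E A = (1 : Matrix (Fin k) (Fin k) ℂ) ⊗ₖ B) ∧
      (∀ B : Matrix (Fin n) (Fin n) ℂ,
        E ((1 : Matrix (Fin k) (Fin k) ℂ) ⊗ₖ B) = (1 : Matrix (Fin k) (Fin k) ℂ) ⊗ₖ B) ∧
      (∀ (A : Matrix (Fin k × Fin n) (Fin k × Fin n) ℂ) (B : Matrix (Fin n) (Fin n) ℂ),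
        E (((1 : Matrix (Fin k) (Fin k) ℂ) ⊗ₖ B) * A)
          = ((1 : Matrix (Fin k) (Fin k) ℂ) ⊗ₖ B) * E A) ∧
      (∀ A : Matrix (Fin k × Fin n) (Fin k × Fin n) ℂ, A.PosSemidef → (E A).PosSemidef) ∧
      (∀ A : Matrix (Fin k × Fin n) (Fin k × Fin n) ℂ, (ρ * E A).trace = (ρ * A).trace)) ↔
    (∃ τ : Matrix (Fin k) (Fin k) ℂ, τ.PosSemidef ∧ τ.trace = 1 ∧ ρ = τ ⊗ₖ σ) :=
  stmt_3_general k n hk ρ hρ hρtr σ hσ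
end

section
/- Let E : M_{kn}(ℂ) ≅ M_k(ℂ)⊗M_n(ℂ) → M_{kn}(ℂ) be a linear map that maps positive semidefinite matrices to positive semidefinite matrices, whose image is contained in {1_k⊗B : B ∈ M_n(ℂ)}, which satisfies E(1_k⊗B) = 1_k⊗B for all B ∈ M_n(ℂ), and which is left-modular: E((1_k⊗B)A) = (1_k⊗B)E(A) for all A ∈ M_{kn}(ℂ) and B ∈ M_n(ℂ). Then there exists a density matrix τ ∈ M_k(ℂ) such that E(A⊗B) = tr(τA)·(1_k⊗B) for all A ∈ M_k(ℂ) and B ∈ M_n(ℂ); i.e., every conditional expectation onto the type I subfactor 1_k⊗M_n(ℂ) is a partial trace. -/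
/-!
For positive `A`, write `E (A ⊗ 1) = 1 ⊗ C`. Modularity gives `E (A ⊗ B) = 1 ⊗ (B * C)`, which is
positive, hence Hermitian, for every positive `B`; so `C` commutes with all positive matrices.
These span `M_n(ℂ)`, so `C` is a scalar, and by linearity `E (A ⊗ 1) = f A • 1` for a positive
functional `f` with `f 1 = 1`; modularity then gives `E (A ⊗ B) = f A • (1 ⊗ B)`. Finally a
positive functional on `M_k(ℂ)` is `A ↦ tr (τ * A)` with `τ i j = f (single j i 1)`, and `τ` is
positive semidefinite because `star x ⬝ᵥ τ *ᵥ x = f (vecMulVec x (star x))`.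
-/

open Matrix Kronecker ComplexOrder
open scoped MatrixOrder

namespace Matrix

variable {l m R : Type*}

theorem span_posSemidef [Fintype m] [DecidableEq m] :
    Submodule.span ℂ {A : Matrix m m ℂ | A.PosSemidef} = ⊤ := by
  simpa only [nonneg_iff_posSemidef] using CStarAlgebra.span_nonneg (A := Matrix m m ℂ)

theorem linearMap_ext_posSemidef [Fintype m] [DecidableEq m] {M : Type*} [AddCommMonoid M]
    [Module ℂ M] {f g : Matrix m m ℂ →ₗ[ℂ] M}
    (h : ∀ A : Matrix m m ℂ, A.PosSemidef → f A = g A) : f = g :=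
  LinearMap.ext_on span_posSemidef h

theorem exists_eq_smul_one_of_commute_posSemidef [Fintype m] [DecidableEq m] {C : Matrix m m ℂ}
    (h : ∀ B : Matrix m m ℂ, B.PosSemidef → Commute B C) : ∃ c : ℂ, C = c • 1 := by
  have hmul : LinearMap.mulRight ℂ C = LinearMap.mulLeft ℂ C :=
    linearMap_ext_posSemidef fun B hB => (h B hB).eq
  obtain ⟨c, hc⟩ := mem_range_scalar_of_commute_single (M := C)
    fun i j _ => LinearMap.congr_fun hmul (single i j 1)
  exact ⟨c, by rw [← hc, scalar_apply, smul_one_eq_diagonal]⟩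

theorem trace_mul_eq_of_linearMap [Fintype m] [DecidableEq m] [CommSemiring R]
    (f : Matrix m m R →ₗ[R] R) (A : Matrix m m R) :
    (of (fun i j => f (single j i 1)) * A).trace = f A := by
  have h : traceLinearMap m R R ∘ₗ LinearMap.mulLeft R (of fun i j => f (single j i 1)) = f := by
    refine ext_linearMap R fun i j => LinearMap.ext fun c => ?_
    simp only [LinearMap.comp_apply, singleLinearMap_apply, LinearMap.mulLeft_apply,
      traceLinearMap_apply, trace_mul_single, of_apply, MulOpposite.smul_eq_mul_unop,
      MulOpposite.unop_op]
    rw [mul_comm, ← smul_eq_mul, ← map_smul, smul_single, smul_eq_mul, mul_one]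
  exact LinearMap.congr_fun h A

theorem exists_posSemidef_trace_mul_eq [Fintype m] [DecidableEq m] (f : Matrix m m ℂ →ₗ[ℂ] ℂ)
    (hf : ∀ A : Matrix m m ℂ, A.PosSemidef → 0 ≤ f A) :
    ∃ τ : Matrix m m ℂ, τ.PosSemidef ∧ ∀ A, (τ * A).trace = f A := by
  set τ : Matrix m m ℂ := of fun i j => f (single j i 1)
  have hstar : ∀ A, f Aᴴ = star (f A) :=
    map_star (PositiveLinearMap.mk₀ f fun A hA => hf A (nonneg_iff_posSemidef.mp hA))
  refine ⟨τ, .of_dotProduct_mulVec_nonneg ?_ fun x => ?_, trace_mul_eq_of_linearMap f⟩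
  · ext i j
    simp [τ, ← hstar, conjTranspose_single]
  · rw [dotProduct_comm, ← trace_vecMulVec, ← mul_vecMulVec, trace_mul_eq_of_linearMap]
    exact hf _ (posSemidef_vecMulVec_self_star x)

theorem submatrix_one_kronecker [MulZeroOneClass R] [DecidableEq l] (i : l) (B : Matrix m m R) :
    ((1 : Matrix l l R) ⊗ₖ B).submatrix (i, ·) (i, ·) = B := by
  ext p q
  simp

theorem PosSemidef.of_one_kronecker [Ring R] [PartialOrder R] [StarRing R] [DecidableEq l]
    [Nonempty l] {B : Matrix m m R} (h : ((1 : Matrix l l R) ⊗ₖ B).PosSemidef) : B.PosSemidef :=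
  submatrix_one_kronecker (Classical.arbitrary l) B ▸ h.submatrix _

theorem kronecker_eq_one_kronecker_mul_kronecker_one [Fintype l] [DecidableEq l] [Fintype m]
    [DecidableEq m] [CommSemiring R] (A : Matrix l l R) (B : Matrix m m R) :
    A ⊗ₖ B = ((1 : Matrix l l R) ⊗ₖ B) * (A ⊗ₖ 1) := by
  rw [← mul_kronecker_mul, one_mul, mul_one]

end Matrix

section ConditionalExpectation

variable {l m : Type*} [Fintype l] [DecidableEq l] [Fintype m] [DecidableEq m]
  (E : Matrix (l × m) (l × m) ℂ →ₗ[ℂ] Matrix (l × m) (l × m) ℂ)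

theorem exists_apply_kronecker_one_eq_smul_one [Nonempty l]
    (hpos : ∀ A : Matrix (l × m) (l × m) ℂ, A.PosSemidef → (E A).PosSemidef)
    (hrange : ∀ A, ∃ B : Matrix m m ℂ, E A = (1 : Matrix l l ℂ) ⊗ₖ B)
    (hmod : ∀ (A : Matrix (l × m) (l × m) ℂ) (B : Matrix m m ℂ),
      E (((1 : Matrix l l ℂ) ⊗ₖ B) * A) = ((1 : Matrix l l ℂ) ⊗ₖ B) * E A)
    {A : Matrix l l ℂ} (hA : A.PosSemidef) : ∃ c : ℂ, E (A ⊗ₖ 1) = c • 1 := by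
  obtain ⟨C, hC⟩ := hrange (A ⊗ₖ 1)
  have hCpos : C.PosSemidef := .of_one_kronecker (hC ▸ hpos _ (hA.kronecker .one))
  have hcomm : ∀ B : Matrix m m ℂ, B.PosSemidef → Commute B C := by
    intro B hB
    have hAB : E (A ⊗ₖ B) = 1 ⊗ₖ (B * C) := by
      rw [kronecker_eq_one_kronecker_mul_kronecker_one, hmod, hC, ← mul_kronecker_mul, one_mul]
    rw [hB.isHermitian.commute_iff hCpos.isHermitian]
    exact (PosSemidef.of_one_kronecker (l := l) (hAB ▸ hpos _ (hA.kronecker hB))).isHermitian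
  obtain ⟨c, rfl⟩ := exists_eq_smul_one_of_commute_posSemidef hcomm
  exact ⟨c, by rw [hC, kronecker_smul, one_kronecker_one]⟩

theorem exists_linearMap_apply_kronecker_eq_smul [Nonempty l] [Nonempty m]
    (hpos : ∀ A : Matrix (l × m) (l × m) ℂ, A.PosSemidef → (E A).PosSemidef)
    (hrange : ∀ A, ∃ B : Matrix m m ℂ, E A = (1 : Matrix l l ℂ) ⊗ₖ B)
    (hmod : ∀ (A : Matrix (l × m) (l × m) ℂ) (B : Matrix m m ℂ),
      E (((1 : Matrix l l ℂ) ⊗ₖ B) * A) = ((1 : Matrix l l ℂ) ⊗ₖ B) * E A) :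
    ∃ f : Matrix l l ℂ →ₗ[ℂ] ℂ, (∀ A, A.PosSemidef → 0 ≤ f A) ∧
      ∀ A B, E (A ⊗ₖ B) = f A • ((1 : Matrix l l ℂ) ⊗ₖ B) := by
  let p : l × m := Classical.arbitrary _
  let EA : Matrix l l ℂ →ₗ[ℂ] Matrix (l × m) (l × m) ℂ :=
    E ∘ₗ (kroneckerBilinear (R := ℂ)).flip (1 : Matrix m m ℂ)
  let f := entryLinearMap ℂ ℂ p p ∘ₗ EA
  have hEA : ∀ A, E (A ⊗ₖ 1) = f A • 1 := LinearMap.congr_fun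
    (show EA = f.smulRight 1 from linearMap_ext_posSemidef fun A hA => by
      obtain ⟨c, hc⟩ := exists_apply_kronecker_one_eq_smul_one E hpos hrange hmod hA
      show E (A ⊗ₖ 1) = E (A ⊗ₖ 1) p p • 1
      simp [hc])
  refine ⟨f, fun A hA => (hpos _ (hA.kronecker .one)).diag_nonneg, fun A B => ?_⟩
  rw [kronecker_eq_one_kronecker_mul_kronecker_one, hmod, hEA, mul_smul_comm, mul_one]

end ConditionalExpectation

/-- Every conditional expectation of `M_{kn}(ℂ) ≅ M_k(ℂ) ⊗ M_n(ℂ)` onto the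
type I subfactor `1_k ⊗ M_n(ℂ)` is a partial trace: there is a density matrix
`τ ∈ M_k(ℂ)` with `E(A ⊗ B) = tr(τA) · (1_k ⊗ B)`. -/
theorem stmt_5 (k n : ℕ) (hk : 1 ≤ k) (hn : 1 ≤ n)
    (E : Matrix (Fin k × Fin n) (Fin k × Fin n) ℂ →ₗ[ℂ]
          Matrix (Fin k × Fin n) (Fin k × Fin n) ℂ)
    (hpos : ∀ A : Matrix (Fin k × Fin n) (Fin k × Fin n) ℂ, A.PosSemidef → (E A).PosSemidef)
    (hrange : ∀ A, ∃ B : Matrix (Fin n) (Fin n) ℂ,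
      E A = (1 : Matrix (Fin k) (Fin k) ℂ) ⊗ₖ B)
    (hfix : ∀ B : Matrix (Fin n) (Fin n) ℂ,
      E ((1 : Matrix (Fin k) (Fin k) ℂ) ⊗ₖ B) = (1 : Matrix (Fin k) (Fin k) ℂ) ⊗ₖ B)
    (hmod : ∀ (A : Matrix (Fin k × Fin n) (Fin k × Fin n) ℂ) (B : Matrix (Fin n) (Fin n) ℂ),
      E (((1 : Matrix (Fin k) (Fin k) ℂ) ⊗ₖ B) * A)
        = ((1 : Matrix (Fin k) (Fin k) ℂ) ⊗ₖ B) * E A) :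
    ∃ τ : Matrix (Fin k) (Fin k) ℂ, τ.PosSemidef ∧ τ.trace = 1 ∧
      ∀ (A : Matrix (Fin k) (Fin k) ℂ) (B : Matrix (Fin n) (Fin n) ℂ),
        E (A ⊗ₖ B) = (τ * A).trace • ((1 : Matrix (Fin k) (Fin k) ℂ) ⊗ₖ B) := by
  let p : Fin k × Fin n := (⟨0, hk⟩, ⟨0, hn⟩)
  have : Nonempty (Fin k) := ⟨p.1⟩
  have : Nonempty (Fin n) := ⟨p.2⟩
  obtain ⟨f, hf_nonneg, hf⟩ := exists_linearMap_apply_kronecker_eq_smul E hpos hrange hmod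
  obtain ⟨τ, hτ, hτf⟩ := exists_posSemidef_trace_mul_eq f hf_nonneg
  have hf_one : f 1 = 1 := by
    simpa using congr($((hf 1 1).symm.trans (hfix 1)) p p)
  exact ⟨τ, hτ, by rw [← mul_one τ, hτf, hf_one], fun A B => by rw [hτf, hf]⟩
end

section
/- Let F : M_n(ℂ) → M_m(ℂ) be a linear unital map satisfying the Kadison–Schwarz inequality F(B)*F(B) ≤ F(B*B) in the Loewner order for all B ∈ M_n(ℂ) (this holds in particular for any UCP map). Let σ ∈ M_n(ℂ) and ρ ∈ M_m(ℂ) be density matrices with tr(ρF(B)) = tr(σB) for all B, and let Q, R be the support projections of σ and ρ respectively. Then: (a) for every B ∈ M_n(ℂ), tr(σB*B) = 0 implies tr(ρF(B)*F(B)) = 0; (b) F(1 − Q) ≤ 1 − R in the Loewner order; (c) R·F(Q)·R = R. -/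
open Matrix ComplexOrder

/-! Kadison–Schwarz and `tr(ρ F(·)) = tr(σ ·)` give
`0 ≤ tr(ρ F(B)ᴴ F(B)) ≤ tr(ρ F(Bᴴ B)) = tr(σ Bᴴ B)`, which is (a).
For the projection `1 - Q`, Kadison–Schwarz says `Yᴴ Y ≤ Y` for `Y = F(1 - Q)`, so `0 ≤ Y ≤ 1`,
while `tr(ρ Y) = tr(σ (1 - Q)) = 0`. A vanishing trace of a product of positive semidefinite
matrices forces the product to vanish, so `ρ Y = 0`, and then `R Y = 0 = Y R` because `R` is a
left multiple of `ρ`. Compressing `1 - Y ≥ 0` by `1 - R` gives (b), and `R (1 - F Q) = R Y = 0`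
gives (c). -/

/-- `P` is the support projection of `σ`: the orthogonal projection (Hermitian idempotent)
whose range equals the range of `σ`. -/
def IsSupportProj {n : Type*} [Fintype n] [DecidableEq n] (P σ : Matrix n n ℂ) : Prop :=
  P.IsHermitian ∧ P * P = P ∧ LinearMap.range P.mulVecLin = LinearMap.range σ.mulVecLin

namespace Matrix

section PosSemidef

variable {k 𝕜 : Type*} [Fintype k] [DecidableEq k] [RCLike 𝕜]

open scoped MatrixOrder in
lemma PosSemidef.exists_eq_conjTranspose_mul_self {A : Matrix k k 𝕜} (hA : A.PosSemidef) :
    ∃ C : Matrix k k 𝕜, A = Cᴴ * C :=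
  CStarAlgebra.nonneg_iff_eq_star_mul_self.mp hA.nonneg

omit [DecidableEq k] in
lemma trace_conjTranspose_mul_self_mul_conjTranspose_mul_self (C D : Matrix k k 𝕜) :
    (Cᴴ * C * (Dᴴ * D)).trace = ((C * Dᴴ)ᴴ * (C * Dᴴ)).trace := by
  rw [conjTranspose_mul, conjTranspose_conjTranspose, Matrix.mul_assoc D, trace_mul_comm D]
  simp only [Matrix.mul_assoc]

lemma PosSemidef.trace_mul_nonneg {A B : Matrix k k 𝕜} (hA : A.PosSemidef) (hB : B.PosSemidef) :
    0 ≤ (A * B).trace := by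
  obtain ⟨C, rfl⟩ := hA.exists_eq_conjTranspose_mul_self
  obtain ⟨D, rfl⟩ := hB.exists_eq_conjTranspose_mul_self
  rw [trace_conjTranspose_mul_self_mul_conjTranspose_mul_self]
  exact (posSemidef_conjTranspose_mul_self _).trace_nonneg

lemma PosSemidef.mul_eq_zero_of_trace_mul_eq_zero {A B : Matrix k k 𝕜} (hA : A.PosSemidef)
    (hB : B.PosSemidef) (h : (A * B).trace = 0) : A * B = 0 := by
  obtain ⟨C, rfl⟩ := hA.exists_eq_conjTranspose_mul_self
  obtain ⟨D, rfl⟩ := hB.exists_eq_conjTranspose_mul_self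
  rw [trace_conjTranspose_mul_self_mul_conjTranspose_mul_self,
    trace_conjTranspose_mul_self_eq_zero_iff] at h
  rw [Matrix.mul_assoc, ← Matrix.mul_assoc C, h, Matrix.zero_mul, Matrix.mul_zero]

lemma PosSemidef.trace_mul_le_trace_mul {ρ A B : Matrix k k 𝕜} (hρ : ρ.PosSemidef)
    (hAB : (B - A).PosSemidef) : (ρ * A).trace ≤ (ρ * B).trace := by
  simpa only [Matrix.mul_sub, trace_sub, sub_nonneg] using hρ.trace_mul_nonneg hAB

omit [DecidableEq k] in
lemma PosSemidef.of_posSemidef_sub_conjTranspose_mul_self {Y : Matrix k k 𝕜}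
    (h : (Y - Yᴴ * Y).PosSemidef) : Y.PosSemidef := by
  simpa only [sub_add_cancel] using h.add (posSemidef_conjTranspose_mul_self Y)

lemma PosSemidef.one_sub_of_posSemidef_sub_conjTranspose_mul_self {Y : Matrix k k 𝕜}
    (h : (Y - Yᴴ * Y).PosSemidef) : (1 - Y).PosSemidef := by
  have hY : Yᴴ = Y := (PosSemidef.of_posSemidef_sub_conjTranspose_mul_self h).1.eq
  have hsum : (1 - Y)ᴴ * (1 - Y) + (Y - Yᴴ * Y) = 1 - Y := by
    simp only [conjTranspose_sub, conjTranspose_one, hY, Matrix.sub_mul, Matrix.mul_sub,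
      Matrix.one_mul, Matrix.mul_one]
    abel
  exact hsum ▸ (posSemidef_conjTranspose_mul_self (1 - Y)).add h

lemma posSemidef_one_sub_sub_of_mul_eq_zero {P Y : Matrix k k 𝕜} (hP : P.IsHermitian)
    (hPP : P * P = P) (hY : Y.IsHermitian) (hPY : P * Y = 0) (h1Y : (1 - Y).PosSemidef) :
    (1 - P - Y).PosSemidef := by
  have hYP : Y * P = 0 := by
    simpa only [conjTranspose_mul, hP.eq, hY.eq, conjTranspose_zero] using congrArg (·ᴴ) hPY
  have hcompress : (1 - P)ᴴ * (1 - Y) * (1 - P) = 1 - P - Y := by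
    simp only [conjTranspose_sub, conjTranspose_one, hP.eq, Matrix.mul_sub, Matrix.sub_mul,
      Matrix.mul_one, Matrix.one_mul, hPY, hYP, hPP, sub_zero]
    abel
  exact hcompress ▸ h1Y.conjTranspose_mul_mul_same (1 - P)

end PosSemidef

lemma exists_eq_mul_of_range_le {R k l m : Type*} [CommSemiring R] [Fintype k] [DecidableEq k]
    [Fintype l] {A : Matrix m k R} {B : Matrix m l R}
    (h : LinearMap.range A.mulVecLin ≤ LinearMap.range B.mulVecLin) :
    ∃ X : Matrix l k R, A = B * X := by
  choose x hx using fun j => h ⟨Pi.single j 1, rfl⟩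
  refine ⟨(of x)ᵀ, ?_⟩
  ext i j
  simpa [mul_apply, mulVec, dotProduct, Pi.single_apply] using (congrFun (hx j) i).symm

end Matrix

namespace IsSupportProj

variable {k : Type*} [Fintype k] [DecidableEq k] {P σ : Matrix k k ℂ}

lemma mul_eq_self (hP : IsSupportProj P σ) (hσ : σ.IsHermitian) : σ * P = σ := by
  obtain ⟨X, hX⟩ := exists_eq_mul_of_range_le hP.2.2.ge
  have hσ' : σ = Xᴴ * P := by rw [← hσ.eq, hX, conjTranspose_mul, hP.1.eq]
  rw [hσ', Matrix.mul_assoc, hP.2.1]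

lemma mul_eq_zero_of_mul_eq_zero {l : Type*} (hP : IsSupportProj P σ) (hσ : σ.IsHermitian)
    {Y : Matrix k l ℂ} (hσY : σ * Y = 0) : P * Y = 0 := by
  obtain ⟨X, hX⟩ := exists_eq_mul_of_range_le hP.2.2.le
  have hP' : P = Xᴴ * σ := by rw [← hP.1.eq, hX, conjTranspose_mul, hσ.eq]
  rw [hP', Matrix.mul_assoc, hσY, Matrix.mul_zero]

end IsSupportProj

theorem stmt_6_general (n m : ℕ)
    (F : Matrix (Fin n) (Fin n) ℂ →ₗ[ℂ] Matrix (Fin m) (Fin m) ℂ)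
    (hFunital : F 1 = 1)
    (hKS : ∀ B : Matrix (Fin n) (Fin n) ℂ, (F (Bᴴ * B) - (F B)ᴴ * F B).PosSemidef)
    (σ : Matrix (Fin n) (Fin n) ℂ) (hσ : σ.PosSemidef)
    (ρ : Matrix (Fin m) (Fin m) ℂ) (hρ : ρ.PosSemidef)
    (hpres : ∀ B : Matrix (Fin n) (Fin n) ℂ, (ρ * F B).trace = (σ * B).trace)
    (Q : Matrix (Fin n) (Fin n) ℂ) (hQ : IsSupportProj Q σ)
    (R : Matrix (Fin m) (Fin m) ℂ) (hR : IsSupportProj R ρ) :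
    (∀ B : Matrix (Fin n) (Fin n) ℂ,
        (σ * (Bᴴ * B)).trace = 0 → (ρ * ((F B)ᴴ * F B)).trace = 0) ∧
    ((1 - R) - F (1 - Q)).PosSemidef ∧
    R * F Q * R = R := by
  have hσQ : σ * Q = σ := hQ.mul_eq_self hσ.1
  set Y := F (1 - Q) with hY
  have hKSY : (Y - Yᴴ * Y).PosSemidef := by
    have hproj : (1 - Q)ᴴ * (1 - Q) = 1 - Q := by
      rw [conjTranspose_sub, conjTranspose_one, hQ.1.eq, (IsIdempotentElem.one_sub hQ.2.1).eq]
    simpa only [hproj] using hKS (1 - Q)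
  have hYpsd : Y.PosSemidef := .of_posSemidef_sub_conjTranspose_mul_self hKSY
  have hρY : ρ * Y = 0 := hρ.mul_eq_zero_of_trace_mul_eq_zero hYpsd <| by
    rw [hpres, Matrix.mul_sub, Matrix.mul_one, hσQ, sub_self, trace_zero]
  have hRY : R * Y = 0 := hR.mul_eq_zero_of_mul_eq_zero hρ.1 hρY
  refine ⟨fun B hB => ?_, ?_, ?_⟩
  · refine le_antisymm ?_ (hρ.trace_mul_nonneg (posSemidef_conjTranspose_mul_self _))
    simpa only [hpres, hB] using hρ.trace_mul_le_trace_mul (hKS B)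
  · exact posSemidef_one_sub_sub_of_mul_eq_zero hR.1 hR.2.1 hYpsd.1 hRY
      (.one_sub_of_posSemidef_sub_conjTranspose_mul_self hKSY)
  · have hRFQ : R * F Q = R := by
      rwa [hY, map_sub, hFunital, Matrix.mul_sub, Matrix.mul_one, sub_eq_zero, eq_comm] at hRY
    rw [hRFQ, hR.2.1]

/-- For a unital Kadison–Schwarz map `F : M_n(ℂ) → M_m(ℂ)` and density
matrices `σ`, `ρ` with `tr(ρ F(B)) = tr(σ B)` for all `B`, with support projections
`Q`, `R` respectively: (a) `tr(σ B*B) = 0` implies `tr(ρ F(B)* F(B)) = 0`;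
(b) `F(1 − Q) ≤ 1 − R` in the Loewner order; (c) `R · F(Q) · R = R`. -/
theorem stmt_6 (n m : ℕ)
    (F : Matrix (Fin n) (Fin n) ℂ →ₗ[ℂ] Matrix (Fin m) (Fin m) ℂ)
    (hFunital : F 1 = 1)
    (hKS : ∀ B : Matrix (Fin n) (Fin n) ℂ, (F (Bᴴ * B) - (F B)ᴴ * F B).PosSemidef)
    (σ : Matrix (Fin n) (Fin n) ℂ) (hσ : σ.PosSemidef) (hσtr : σ.trace = 1)
    (ρ : Matrix (Fin m) (Fin m) ℂ) (hρ : ρ.PosSemidef) (hρtr : ρ.trace = 1)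
    (hpres : ∀ B : Matrix (Fin n) (Fin n) ℂ, (ρ * F B).trace = (σ * B).trace)
    (Q : Matrix (Fin n) (Fin n) ℂ) (hQ : IsSupportProj Q σ)
    (R : Matrix (Fin m) (Fin m) ℂ) (hR : IsSupportProj R ρ) :
    (∀ B : Matrix (Fin n) (Fin n) ℂ,
        (σ * (Bᴴ * B)).trace = 0 → (ρ * ((F B)ᴴ * F B)).trace = 0) ∧
    ((1 - R) - F (1 - Q)).PosSemidef ∧
    R * F Q * R = R :=
  stmt_6_general n m F hFunital hKS σ hσ ρ hρ hpres Q hQ R hR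
end

section
/- Let F : M_n(ℂ) → M_m(ℂ) be a UCP map, and let σ ∈ M_n(ℂ), ρ ∈ M_m(ℂ) be positive definite density matrices with tr(ρF(B)) = tr(σB) for all B ∈ M_n(ℂ). Then the following are equivalent: (a) F(σB)ρ = ρF(Bσ) for all B ∈ M_n(ℂ); (b) F(σ^{it} B σ^{-it}) = ρ^{it} F(B) ρ^{-it} for all B ∈ M_n(ℂ) and all t ∈ ℝ (the Accardi–Cecchini intertwining condition for the modular groups). -/
open Matrix ComplexOrder

/-- The `k`-th amplification `id_{M_k(ℂ)} ⊗ Φ` of a map `Φ` between matrix algebras. -/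
def amplify {n m : Type*} (Φ : Matrix n n ℂ → Matrix m m ℂ) (k : ℕ)
    (M : Matrix (Fin k × n) (Fin k × n) ℂ) : Matrix (Fin k × m) (Fin k × m) ℂ :=
  Matrix.of fun p q => Φ (Matrix.of fun a b => M (p.1, a) (q.1, b)) p.2 q.2

/-- Complete positivity: all amplifications preserve positive semidefiniteness. -/
def IsCP {n m : Type*} [Fintype n] [Fintype m] (Φ : Matrix n n ℂ → Matrix m m ℂ) : Prop :=
  ∀ (k : ℕ) (M : Matrix (Fin k × n) (Fin k × n) ℂ), M.PosSemidef → (amplify Φ k M).PosSemidef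

/-
In eigenbases `σ = U diag(d) U*` and `ρ = V diag(e) V*`, write `H = Ad(V*) ∘ F ∘ Ad(U)`.
Conjugating by `σ^z` and `ρ^z` rescales the coefficient `H(E_ab)_pq` by `(d_a/d_b)^z` and
`(e_p/e_q)^z` respectively, so `F(σ^z B σ^{-z}) = ρ^z F(B) ρ^{-z}` holds for all `B` iff these
two factors agree wherever the coefficient is nonzero. Condition (a) is the case `z = 1`
(after substituting `B σ⁻¹` for `B`), condition (b) the cases `z = it`, and for positive reals
`x^{it} = y^{it}` for every `t` forces `x = y`: at `t = π / log(x/y)` the two differ by the sign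
`e^{iπ} = -1`.
-/

section Conjugation
variable {M N : Type*} [Monoid M] [Monoid N]

theorem forall_map_mul_mul_eq_iff_map_conj (F : M → N) (x : Mˣ) (y : Nˣ) :
    (∀ b, F (x * b) * y = y * F (b * x)) ↔ ∀ b, F (x * b * ↑x⁻¹) = y * F b * ↑y⁻¹ := by
  constructor
  · intro h b
    rw [← Units.mul_left_inj y, Units.inv_mul_cancel_right, mul_assoc (x : M), h,
      Units.inv_mul_cancel_right]
  · intro h b
    rw [← Units.eq_mul_inv_iff_mul_eq, ← h, ← mul_assoc, Units.mul_inv_cancel_right]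

theorem forall_map_units_conj_iff (F : M → N) (u : Mˣ) (v : Nˣ) (x x' : M) (y y' : N) :
    (∀ b, F (u * x * ↑u⁻¹ * b * (u * x' * ↑u⁻¹)) = v * y * ↑v⁻¹ * F b * (v * y' * ↑v⁻¹)) ↔
      ∀ c, ↑v⁻¹ * F (u * (x * c * x') * ↑u⁻¹) * v =
        y * (↑v⁻¹ * F (u * c * ↑u⁻¹) * v) * y' := by
  have hu (c : M) : (u : M) * x * ↑u⁻¹ * (u * c * ↑u⁻¹) * (u * x' * ↑u⁻¹) =
      u * (x * c * x') * ↑u⁻¹ := by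
    simp [mul_assoc]
  constructor
  · intro h c
    rw [← hu, h]
    simp [mul_assoc]
  · intro h b
    obtain ⟨c, rfl⟩ : ∃ c, b = u * c * ↑u⁻¹ := ⟨↑u⁻¹ * b * u, by simp [mul_assoc]⟩
    rw [hu, ← Units.mul_right_inj v⁻¹, ← Units.mul_left_inj v, h]
    simp [mul_assoc]

end Conjugation

section Diagonal
variable {K : Type*} [CommRing K] [IsDomain K] {n m : Type*} [Fintype n] [DecidableEq n]
  [Fintype m] [DecidableEq m]

theorem Matrix.diagonal_mul_single_mul_diagonal {R : Type*} [Semiring R] (α α' : n → R)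
    (a b : n) (x : R) :
    diagonal α * single a b x * diagonal α' = single a b (α a * x * α' b) := by
  ext i j
  rw [mul_diagonal, diagonal_mul, single_apply, single_apply]
  split_ifs with h
  · rw [h.1, h.2]
  · simp

theorem forall_map_diagonal_mul_mul_diagonal_iff (H : Matrix n n K →ₗ[K] Matrix m m K)
    (α α' : n → K) (β β' : m → K) :
    (∀ C, H (diagonal α * C * diagonal α') = diagonal β * H C * diagonal β') ↔
      ∀ a b p q, H (single a b 1) p q ≠ 0 → α a * α' b = β p * β' q := by
  have H_single (a b : n) (x : K) : H (single a b x) = x • H (single a b 1) := by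
    rw [← map_smul, smul_single, smul_eq_mul, mul_one]
  constructor
  · intro h a b p q hH
    have hpq := congrFun₂ (h (single a b 1)) p q
    rw [diagonal_mul_single_mul_diagonal, H_single, mul_diagonal, diagonal_mul,
      Matrix.smul_apply, smul_eq_mul, mul_one] at hpq
    exact mul_right_cancel₀ hH (by linear_combination hpq)
  · intro h C
    induction C using Matrix.induction_on' with
    | h_zero => simp
    | h_add C C' hC hC' => simp only [mul_add, add_mul, map_add, hC, hC']
    | h_std_basis a b x =>
      ext p q
      rw [diagonal_mul_single_mul_diagonal, H_single, H_single a b x, mul_diagonal, diagonal_mul]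
      simp only [Matrix.smul_apply, smul_eq_mul]
      by_cases hH : H (single a b 1) p q = 0
      · simp [hH]
      · linear_combination x * H (single a b 1) p q * h a b p q hH

end Diagonal

section Spectral
variable {n m : Type*} [Fintype n] [DecidableEq n] [Fintype m] [DecidableEq m]

theorem Matrix.exp_mul_exp_neg {𝔸 : Type*} [NormedRing 𝔸] [NormedAlgebra ℚ 𝔸] [CompleteSpace 𝔸]
    (A : Matrix n n 𝔸) :
    NormedSpace.exp A * NormedSpace.exp (-A) = 1 := by
  rw [← exp_add_of_commute _ _ (Commute.neg_right (Commute.refl A)), add_neg_cancel,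
    NormedSpace.exp_zero]

noncomputable def Matrix.expUnit {𝔸 : Type*} [NormedRing 𝔸] [NormedAlgebra ℚ 𝔸]
    [CompleteSpace 𝔸] (A : Matrix n n 𝔸) : (Matrix n n 𝔸)ˣ :=
  ⟨NormedSpace.exp A, NormedSpace.exp (-A), exp_mul_exp_neg A, by
    simpa using exp_mul_exp_neg (-A)⟩

theorem Matrix.IsHermitian.exp_smul_cfc {A : Matrix n n ℂ} (hA : A.IsHermitian) (f : ℝ → ℝ)
    (z : ℂ) :
    NormedSpace.exp (z • hA.cfc f) =
      (hA.eigenvectorUnitary : Matrix n n ℂ) *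
        diagonal (fun i => Complex.exp (z * f (hA.eigenvalues i))) *
        star (hA.eigenvectorUnitary : Matrix n n ℂ) := by
  rw [Matrix.IsHermitian.cfc, Unitary.conjStarAlgAut_apply, ← smul_mul_assoc, ← mul_smul_comm,
    ← diagonal_smul]
  refine (exp_units_conj (Unitary.toUnits hA.eigenvectorUnitary) _).trans ?_
  rw [exp_diagonal, Pi.exp_def, Complex.exp_eq_exp_ℂ]
  rfl

theorem Matrix.PosDef.exp_cfc_log_s7 {A : Matrix n n ℂ} (hA : A.PosDef) :
    NormedSpace.exp (hA.isHermitian.cfc Real.log) = A := by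
  have h := IsHermitian.exp_smul_cfc hA.isHermitian Real.log 1
  simp only [one_smul, one_mul, ← Complex.ofReal_exp, Real.exp_log (hA.eigenvalues_pos _)] at h
  rw [h]
  conv_rhs => rw [hA.isHermitian.spectral_theorem]
  rfl

theorem forall_map_mul_mul_eq_iff_exp_cfc_log (F : Matrix n n ℂ → Matrix m m ℂ)
    {A : Matrix n n ℂ} {B : Matrix m m ℂ} (hA : A.PosDef) (hB : B.PosDef) :
    (∀ X, F (A * X) * B = B * F (X * A)) ↔
      ∀ X, F (NormedSpace.exp ((1 : ℂ) • hA.isHermitian.cfc Real.log) * X *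
          NormedSpace.exp ((-1 : ℂ) • hA.isHermitian.cfc Real.log)) =
        NormedSpace.exp ((1 : ℂ) • hB.isHermitian.cfc Real.log) * F X *
          NormedSpace.exp ((-1 : ℂ) • hB.isHermitian.cfc Real.log) := by
  have h := forall_map_mul_mul_eq_iff_map_conj F (expUnit (hA.isHermitian.cfc Real.log))
    (expUnit (hB.isHermitian.cfc Real.log))
  simpa only [expUnit, Units.val_mk, Units.inv_mk, one_smul, neg_smul, hA.exp_cfc_log_s7,
    hB.exp_cfc_log_s7] using h

theorem forall_map_exp_smul_cfc_conj_iff (F : Matrix n n ℂ →ₗ[ℂ] Matrix m m ℂ)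
    {A : Matrix n n ℂ} {B : Matrix m m ℂ} (hA : A.IsHermitian) (hB : B.IsHermitian)
    (f : ℝ → ℝ) (z : ℂ) :
    (∀ X, F (NormedSpace.exp (z • hA.cfc f) * X * NormedSpace.exp ((-z) • hA.cfc f)) =
        NormedSpace.exp (z • hB.cfc f) * F X * NormedSpace.exp ((-z) • hB.cfc f)) ↔
      ∀ a b p q,
        (star (hB.eigenvectorUnitary : Matrix m m ℂ) *
            F ((hA.eigenvectorUnitary : Matrix n n ℂ) * single a b 1 *
              star (hA.eigenvectorUnitary : Matrix n n ℂ)) *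
            hB.eigenvectorUnitary) p q ≠ 0 →
          Complex.exp (z * ↑(f (hA.eigenvalues a) - f (hA.eigenvalues b))) =
            Complex.exp (z * ↑(f (hB.eigenvalues p) - f (hB.eigenvalues q))) := by
  let U := Unitary.toUnits hA.eigenvectorUnitary
  let V := Unitary.toUnits hB.eigenvectorUnitary
  let H : Matrix n n ℂ →ₗ[ℂ] Matrix m m ℂ :=
    LinearMap.mulRight ℂ (V : Matrix m m ℂ) ∘ₗ LinearMap.mulLeft ℂ (↑V⁻¹ : Matrix m m ℂ) ∘ₗ F ∘ₗ
      LinearMap.mulRight ℂ (↑U⁻¹ : Matrix n n ℂ) ∘ₗ LinearMap.mulLeft ℂ (U : Matrix n n ℂ)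
  have hexp (r s : ℝ) :
      Complex.exp (z * r) * Complex.exp (-z * s) = Complex.exp (z * ↑(r - s)) := by
    rw [← Complex.exp_add]; push_cast; ring_nf
  simp only [IsHermitian.exp_smul_cfc]
  refine (forall_map_units_conj_iff F U V _ _ _ _).trans ?_
  refine (forall_map_diagonal_mul_mul_diagonal_iff H _ _ _ _).trans ?_
  simp only [hexp]
  rfl

end Spectral

theorem Complex.forall_exp_I_mul_ofReal_eq_iff (x y : ℝ) :
    (∀ t : ℝ, Complex.exp (I * t * x) = Complex.exp (I * t * y)) ↔ x = y := by
  refine ⟨fun h => by_contra fun hxy => ?_, fun h _ => h ▸ rfl⟩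
  have hxy' : (x : ℂ) - y ≠ 0 := by exact_mod_cast sub_ne_zero.2 hxy
  have h1 := Complex.exp_eq_exp_iff_exp_sub_eq_one.1 (h (Real.pi / (x - y)))
  have h2 : I * ↑(Real.pi / (x - y)) * x - I * ↑(Real.pi / (x - y)) * y = Real.pi * I := by
    push_cast; field_simp
  rw [h2, Complex.exp_pi_mul_I] at h1
  norm_num at h1

theorem stmt_7_general (n m : ℕ)
    (F : Matrix (Fin n) (Fin n) ℂ →ₗ[ℂ] Matrix (Fin m) (Fin m) ℂ)
    (σ : Matrix (Fin n) (Fin n) ℂ) (hσ : σ.PosDef)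
    (ρ : Matrix (Fin m) (Fin m) ℂ) (hρ : ρ.PosDef) :
    (∀ B : Matrix (Fin n) (Fin n) ℂ, F (σ * B) * ρ = ρ * F (B * σ)) ↔
    (∀ (B : Matrix (Fin n) (Fin n) ℂ) (t : ℝ),
      F (NormedSpace.exp ((Complex.I * (t : ℂ)) • (hσ.isHermitian.cfc Real.log)) * B *
         NormedSpace.exp ((-(Complex.I * (t : ℂ))) • (hσ.isHermitian.cfc Real.log)))
        = NormedSpace.exp ((Complex.I * (t : ℂ)) • (hρ.isHermitian.cfc Real.log)) * F B *
          NormedSpace.exp ((-(Complex.I * (t : ℂ))) • (hρ.isHermitian.cfc Real.log))) := by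
  rw [forall_map_mul_mul_eq_iff_exp_cfc_log F hσ hρ, forall_map_exp_smul_cfc_conj_iff,
    forall_comm (β := ℝ)]
  simp only [forall_map_exp_smul_cfc_conj_iff, one_mul, ← Complex.ofReal_exp, Complex.ofReal_inj,
    Real.exp_eq_exp]
  constructor
  · intro h t a b p q hH
    exact (Complex.forall_exp_I_mul_ofReal_eq_iff _ _).2 (h a b p q hH) t
  · intro h a b p q hH
    exact (Complex.forall_exp_I_mul_ofReal_eq_iff _ _).1 fun t => h t a b p q hH

/-- For a state-preserving UCP map `F : M_n(ℂ) → M_m(ℂ)` between positive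
definite density matrices `σ` and `ρ`, `F(σB)ρ = ρF(Bσ)` for all `B` iff `F` intertwines
the modular groups: `F(σ^{it} B σ^{-it}) = ρ^{it} F(B) ρ^{-it}` for all `B`, `t`
(the Accardi–Cecchini condition), where `ρ^{it} = exp(i t · log ρ)` with `log` defined
via the functional calculus for Hermitian matrices. -/
theorem stmt_7 (n m : ℕ)
    (F : Matrix (Fin n) (Fin n) ℂ →ₗ[ℂ] Matrix (Fin m) (Fin m) ℂ)
    (hFcp : IsCP (⇑F)) (hFunital : F 1 = 1)
    (σ : Matrix (Fin n) (Fin n) ℂ) (hσ : σ.PosDef) (hσtr : σ.trace = 1)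
    (ρ : Matrix (Fin m) (Fin m) ℂ) (hρ : ρ.PosDef) (hρtr : ρ.trace = 1)
    (hpres : ∀ B : Matrix (Fin n) (Fin n) ℂ, (ρ * F B).trace = (σ * B).trace) :
    (∀ B : Matrix (Fin n) (Fin n) ℂ, F (σ * B) * ρ = ρ * F (B * σ)) ↔
    (∀ (B : Matrix (Fin n) (Fin n) ℂ) (t : ℝ),
      F (NormedSpace.exp ((Complex.I * (t : ℂ)) • (hσ.isHermitian.cfc Real.log)) * B *
         NormedSpace.exp ((-(Complex.I * (t : ℂ))) • (hσ.isHermitian.cfc Real.log)))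
        = NormedSpace.exp ((Complex.I * (t : ℂ)) • (hρ.isHermitian.cfc Real.log)) * F B *
          NormedSpace.exp ((-(Complex.I * (t : ℂ))) • (hρ.isHermitian.cfc Real.log))) :=
  stmt_7_general n m F σ hσ ρ hρ
end

section
/- Let 𝒜, ℬ, 𝒞 be multi-matrix algebras, let ω be a state on 𝒜, let F : ℬ → 𝒜 and G : 𝒞 → ℬ be UCP maps, and set ξ := ω∘F and ζ := ξ∘G. If F̄ : 𝒜 → ℬ is a Bayesian inverse of (F, ω) (i.e., F̄ is UCP and ξ(F̄(A)B) = ω(A·F(B)) for all A, B) and Ḡ : ℬ → 𝒞 is a Bayesian inverse of (G, ξ), then Ḡ∘F̄ is a Bayesian inverse of (F∘G, ω): it is UCP and ζ(Ḡ(F̄(A))·C) = ω(A·F(G(C))) for all A ∈ 𝒜 and C ∈ 𝒞. -/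
open Matrix ComplexOrder

/-- A linear map between multi-matrix algebras is UCP if it is unital and each of its
block components is completely positive. -/
def IsUCP {X Y : Type*} [Fintype X] [Fintype Y] [DecidableEq Y] {m : X → ℕ} {n : Y → ℕ}
    (F : ((y : Y) → Matrix (Fin (n y)) (Fin (n y)) ℂ) →ₗ[ℂ]
         ((x : X) → Matrix (Fin (m x)) (Fin (m x)) ℂ)) : Prop :=
  F 1 = 1 ∧ ∀ (x : X) (y : Y), IsCP (fun B => F (Pi.single y B) x)

/-- A state on a multi-matrix algebra: a unital positive linear functional. -/
def IsState {X : Type*} [Fintype X] {m : X → ℕ}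
    (ω : ((x : X) → Matrix (Fin (m x)) (Fin (m x)) ℂ) →ₗ[ℂ] ℂ) : Prop :=
  ω 1 = 1 ∧ ∀ A : (x : X) → Matrix (Fin (m x)) (Fin (m x)) ℂ, 0 ≤ ω (star A * A)

lemma isCP_comp {n m p : Type*} [Fintype n] [Fintype m] [Fintype p]
    {Φ : Matrix n n ℂ → Matrix m m ℂ} {Ψ : Matrix m m ℂ → Matrix p p ℂ}
    (hΦ : IsCP Φ) (hΨ : IsCP Ψ) : IsCP (fun A => Ψ (Φ A)) := by
  intro k M hM
  have h : amplify (fun A => Ψ (Φ A)) k M = amplify Ψ k (amplify Φ k M) := rfl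
  rw [h]
  exact hΨ k _ (hΦ k M hM)

lemma isCP_sum {n m : Type*} [Fintype n] [Fintype m] {ι : Type*} (s : Finset ι)
    (Φ : ι → Matrix n n ℂ → Matrix m m ℂ) (h : ∀ i ∈ s, IsCP (Φ i)) :
    IsCP (fun A => ∑ i ∈ s, Φ i A) := by
  intro k M hM
  have he : amplify (fun A => ∑ i ∈ s, Φ i A) k M = ∑ i ∈ s, amplify (Φ i) k M := by
    ext p q
    simp only [amplify, Matrix.sum_apply, Matrix.of_apply]
  rw [he]
  exact Finset.sum_induction _ _ (fun a b ha hb => ha.add hb) (Matrix.PosSemidef.zero)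
    (fun i hi => h i hi k M hM)

/-- Bayesian inverses compose: if `F̄` is a Bayesian inverse of `(F, ω)` and
`Ḡ` is a Bayesian inverse of `(G, ξ)` where `ξ := ω∘F`, then `Ḡ∘F̄` is a Bayesian inverse
of `(F∘G, ω)`. -/
theorem stmt_11 {X Y Z : Type*} [Fintype X] [Fintype Y] [Fintype Z]
    [DecidableEq X] [DecidableEq Y] [DecidableEq Z]
    (m : X → ℕ) (n : Y → ℕ) (l : Z → ℕ)
    (ω : ((x : X) → Matrix (Fin (m x)) (Fin (m x)) ℂ) →ₗ[ℂ] ℂ) (hω : IsState ω)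
    (F : ((y : Y) → Matrix (Fin (n y)) (Fin (n y)) ℂ) →ₗ[ℂ]
         ((x : X) → Matrix (Fin (m x)) (Fin (m x)) ℂ)) (hF : IsUCP F)
    (G : ((z : Z) → Matrix (Fin (l z)) (Fin (l z)) ℂ) →ₗ[ℂ]
         ((y : Y) → Matrix (Fin (n y)) (Fin (n y)) ℂ)) (hG : IsUCP G)
    (Fbar : ((x : X) → Matrix (Fin (m x)) (Fin (m x)) ℂ) →ₗ[ℂ]
            ((y : Y) → Matrix (Fin (n y)) (Fin (n y)) ℂ)) (hFbar : IsUCP Fbar)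
    (hFbayes : ∀ (A : (x : X) → Matrix (Fin (m x)) (Fin (m x)) ℂ)
        (B : (y : Y) → Matrix (Fin (n y)) (Fin (n y)) ℂ),
      ω (F (Fbar A * B)) = ω (A * F B))
    (Gbar : ((y : Y) → Matrix (Fin (n y)) (Fin (n y)) ℂ) →ₗ[ℂ]
            ((z : Z) → Matrix (Fin (l z)) (Fin (l z)) ℂ)) (hGbar : IsUCP Gbar)
    (hGbayes : ∀ (B : (y : Y) → Matrix (Fin (n y)) (Fin (n y)) ℂ)
        (C : (z : Z) → Matrix (Fin (l z)) (Fin (l z)) ℂ),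
      ω (F (G (Gbar B * C))) = ω (F (B * G C))) :
    IsUCP (Gbar ∘ₗ Fbar) ∧
    ∀ (A : (x : X) → Matrix (Fin (m x)) (Fin (m x)) ℂ)
      (C : (z : Z) → Matrix (Fin (l z)) (Fin (l z)) ℂ),
      ω (F (G (Gbar (Fbar A) * C))) = ω (A * F (G C)) := by
  refine ⟨⟨?_, ?_⟩, ?_⟩
  · simp [LinearMap.comp_apply, hFbar.1, hGbar.1]
  · intro z x
    have hdec : (fun B => (Gbar ∘ₗ Fbar) (Pi.single x B) z)
        = fun B => ∑ y, Gbar (Pi.single y (Fbar (Pi.single x B) y)) z := by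
      funext B
      conv_lhs => rw [LinearMap.comp_apply, ← Finset.univ_sum_single (Fbar (Pi.single x B))]
      rw [map_sum]
      simp [Finset.sum_apply]
    rw [hdec]
    exact isCP_sum _ _ (fun y _ => isCP_comp (hFbar.2 y x) (hGbar.2 z y))
  · intro A C
    rw [hGbayes (Fbar A) C, hFbayes A (G C)]
end

section
/- Let 𝒜 and ℬ be multi-matrix algebras, let F : ℬ → 𝒜 be a bijective UCP map whose inverse F⁻¹ : 𝒜 → ℬ is also UCP, let ω be a state on 𝒜, and set ξ := ω∘F. Then F⁻¹ is a Bayesian inverse of (F, ω): ξ(F⁻¹(A)·B) = ω(A·F(B)) for all A ∈ 𝒜 and B ∈ ℬ. -/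
open Matrix ComplexOrder

/-! A UCP map satisfies the Kadison–Schwarz inequality `F(a)* F(a) ≤ F(a* a)`: the block matrix
`[[1, F a], [F a*, F(a* a)]]` is positive by 2-positivity, and its Schur complement is the gap.
Applying the inequality to `F⁻¹` at `F a` and pushing it back through the positive map `F` gives
the reverse inequality. Equality in the Schwarz inequality for every `a` makes `F` multiplicative
by polarization, and then `ω (F (F⁻¹ A * B)) = ω (A * F B)` is immediate. -/

theorem monotone_of_map_star_mul_self_nonneg {R S G : Type*} [NonUnitalSemiring R] [PartialOrder R]
    [StarRing R] [StarOrderedRing R] [AddCommMonoid S] [PartialOrder S] [IsOrderedAddMonoid S]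
    [FunLike G R S] [AddMonoidHomClass G R S] (f : G) (hf : ∀ s, 0 ≤ f (star s * s)) :
    Monotone f := by
  intro x y hxy
  obtain ⟨p, hp, rfl⟩ := (StarOrderedRing.le_iff x y).mp hxy
  rw [map_add]
  refine le_add_of_nonneg_right ?_
  clear hxy
  induction hp using AddSubmonoid.closure_induction with
  | mem _ h => obtain ⟨s, rfl⟩ := h; exact hf s
  | zero => simp
  | add _ _ _ _ h₁ h₂ => rw [map_add]; exact add_nonneg h₁ h₂

theorem LinearMap.map_star_mul_of_map_star_mul_self {A B : Type*} [Ring A] [StarRing A]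
    [Algebra ℂ A] [StarModule ℂ A] [Ring B] [StarRing B] [Algebra ℂ B] [StarModule ℂ B]
    (f : A →ₗ[ℂ] B) (hf : ∀ a, f (star a * a) = star (f a) * f a) (a b : A) :
    f (star a * b) = star (f a) * f b := by
  -- Polarization: the expansions at `a + b` and `a + i • b` isolate the cross terms.
  have hsum := hf (a + b)
  have hi := hf (a + Complex.I • b)
  simp only [map_add, map_smul, star_add, star_smul, add_mul, mul_add, smul_mul_assoc,
    mul_smul_comm, hf, Complex.star_def, Complex.conj_I] at hsum hi
  linear_combination (norm := match_scalars <;> ring_nf <;> simp [Complex.I_sq])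
    (1 / 2 : ℂ) • hsum - (Complex.I / 2) • hi

open scoped MatrixOrder

abbrev MultiMatrix {ι : Type*} (d : ι → ℕ) :=
  (i : ι) → Matrix (Fin (d i)) (Fin (d i)) ℂ

namespace IsUCP

variable {X Y : Type*} [Fintype X] [Fintype Y] [DecidableEq Y] {m : X → ℕ} {n : Y → ℕ}
  {F : MultiMatrix n →ₗ[ℂ] MultiMatrix m}

theorem posSemidef_amplify_pi (hF : IsUCP F) {k : ℕ}
    (M : (y : Y) → Matrix (Fin k × Fin (n y)) (Fin k × Fin (n y)) ℂ)
    (hM : ∀ y, (M y).PosSemidef) (x : X) :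
    (of fun p q : Fin k × Fin (m x) =>
      F (fun y => of fun a b => M y (p.1, a) (q.1, b)) x p.2 q.2).PosSemidef := by
  have hsum : (of fun p q : Fin k × Fin (m x) =>
      F (fun y => of fun a b => M y (p.1, a) (q.1, b)) x p.2 q.2)
      = ∑ y, amplify (fun B => F (Pi.single y B) x) k (M y) := by
    ext p q
    conv_lhs => rw [of_apply, ← Finset.univ_sum_single (fun y => of _), map_sum]
    simp [amplify, Finset.sum_apply, Matrix.sum_apply]
  rw [hsum]
  exact posSemidef_sum _ fun y _ => hF.2 x y k (M y) (hM y)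

theorem posSemidef_fromBlocks (hF : IsUCP F) (a : MultiMatrix n) (x : X) :
    (fromBlocks 1 (F a x) (F (star a) x) (F (star a * a) x)).PosSemidef := by
  set w : Fin 2 → MultiMatrix n := ![1, a]
  -- `V y` is the block row `[1, a y]`, so `(V y)ᴴ * V y` is `[[1, a y], [(a y)ᴴ, (a y)ᴴ * a y]]`.
  set V : (y : Y) → Matrix (Fin (n y)) (Fin 2 × Fin (n y)) ℂ :=
    fun y => of fun i q => w q.1 y i q.2
  have hV : ∀ c d : Fin 2,
      (fun y => of fun i j => ((V y)ᴴ * V y) (c, i) (d, j)) = star (w c) * w d := by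
    intro c d
    funext y
    ext i j
    simp [V, mul_apply, conjTranspose_apply, star_eq_conjTranspose]
  have h := (hF.posSemidef_amplify_pi (fun y => (V y)ᴴ * V y)
    (fun y => posSemidef_conjTranspose_mul_self (V y)) x).submatrix
    (Sum.elim (fun i => ((0 : Fin 2), i)) (fun i => ((1 : Fin 2), i)))
  convert h using 1
  ext (i | i) (j | j) <;> simp [hV, w, hF.1]

theorem map_star (hF : IsUCP F) (a : MultiMatrix n) : F (star a) = star (F a) := by
  funext x
  have h := (isHermitian_fromBlocks_iff.mp (hF.posSemidef_fromBlocks a x).isHermitian).2.1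
  simpa [star_eq_conjTranspose] using h.symm

theorem star_mul_self_le (hF : IsUCP F) (a : MultiMatrix n) :
    star (F a) * F a ≤ F (star a * a) := by
  intro x
  have h := hF.posSemidef_fromBlocks a x
  rw [hF.map_star] at h
  let _ : Invertible (1 : Matrix (Fin (m x)) (Fin (m x)) ℂ) := invertibleOne
  simpa [le_iff, star_eq_conjTranspose] using
    (PosDef.fromBlocks₁₁ (F a x) (F (star a * a) x) PosDef.one).mp h

theorem monotone (hF : IsUCP F) : Monotone F :=
  monotone_of_map_star_mul_self_nonneg F fun s =>
    (star_mul_self_nonneg (F s)).trans (hF.star_mul_self_le s)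

variable [DecidableEq X] {G : MultiMatrix m →ₗ[ℂ] MultiMatrix n}

theorem map_star_mul_self_of_inverse (hF : IsUCP F) (hG : IsUCP G)
    (hGF : G ∘ₗ F = LinearMap.id) (hFG : F ∘ₗ G = LinearMap.id) (a : MultiMatrix n) :
    F (star a * a) = star (F a) * F a := by
  refine le_antisymm ?_ (hF.star_mul_self_le a)
  have h := hG.star_mul_self_le (F a)
  rw [← LinearMap.comp_apply G F, hGF, LinearMap.id_apply] at h
  simpa [← LinearMap.comp_apply F G, hFG] using hF.monotone h

theorem map_mul_of_inverse (hF : IsUCP F) (hG : IsUCP G)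
    (hGF : G ∘ₗ F = LinearMap.id) (hFG : F ∘ₗ G = LinearMap.id) (a b : MultiMatrix n) :
    F (a * b) = F a * F b := by
  simpa [hF.map_star] using F.map_star_mul_of_map_star_mul_self
    (hF.map_star_mul_self_of_inverse hG hGF hFG) (star a) b

end IsUCP

theorem stmt_12_general {X Y : Type*} [Fintype X] [Fintype Y] [DecidableEq X] [DecidableEq Y]
    (m : X → ℕ) (n : Y → ℕ)
    (ω : ((x : X) → Matrix (Fin (m x)) (Fin (m x)) ℂ) →ₗ[ℂ] ℂ)
    (F : ((y : Y) → Matrix (Fin (n y)) (Fin (n y)) ℂ) →ₗ[ℂ]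
         ((x : X) → Matrix (Fin (m x)) (Fin (m x)) ℂ)) (hF : IsUCP F)
    (Finv : ((x : X) → Matrix (Fin (m x)) (Fin (m x)) ℂ) →ₗ[ℂ]
            ((y : Y) → Matrix (Fin (n y)) (Fin (n y)) ℂ)) (hFinv : IsUCP Finv)
    (hleft : Finv ∘ₗ F = LinearMap.id) (hright : F ∘ₗ Finv = LinearMap.id) :
    ∀ (A : (x : X) → Matrix (Fin (m x)) (Fin (m x)) ℂ)
      (B : (y : Y) → Matrix (Fin (n y)) (Fin (n y)) ℂ),
      ω (F (Finv A * B)) = ω (A * F B) := by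
  intro A B
  rw [hF.map_mul_of_inverse hFinv hleft hright, ← LinearMap.comp_apply F Finv, hright,
    LinearMap.id_apply]

/-- If `F : ℬ → 𝒜` is a bijective UCP map between multi-matrix algebras
whose inverse is also UCP, and `ω` is a state on `𝒜` with `ξ := ω∘F`, then `F⁻¹` is a
Bayesian inverse of `(F, ω)`: `ξ(F⁻¹(A)·B) = ω(A·F(B))` for all `A`, `B`. -/
theorem stmt_12 {X Y : Type*} [Fintype X] [Fintype Y] [DecidableEq X] [DecidableEq Y]
    (m : X → ℕ) (n : Y → ℕ)
    (ω : ((x : X) → Matrix (Fin (m x)) (Fin (m x)) ℂ) →ₗ[ℂ] ℂ) (hω : IsState ω)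
    (F : ((y : Y) → Matrix (Fin (n y)) (Fin (n y)) ℂ) →ₗ[ℂ]
         ((x : X) → Matrix (Fin (m x)) (Fin (m x)) ℂ)) (hF : IsUCP F)
    (Finv : ((x : X) → Matrix (Fin (m x)) (Fin (m x)) ℂ) →ₗ[ℂ]
            ((y : Y) → Matrix (Fin (n y)) (Fin (n y)) ℂ)) (hFinv : IsUCP Finv)
    (hleft : Finv ∘ₗ F = LinearMap.id) (hright : F ∘ₗ Finv = LinearMap.id) :
    ∀ (A : (x : X) → Matrix (Fin (m x)) (Fin (m x)) ℂ)
      (B : (y : Y) → Matrix (Fin (n y)) (Fin (n y)) ℂ),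
      ω (F (Finv A * B)) = ω (A * F B) :=
  stmt_12_general m n ω F hF Finv hFinv hleft hright
end
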